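/- arXiv:2509.07835 — 15 statements merged into one kernel-verified Lean document; each statement's English description precedes it below -/
import Mathlib

section
/- Let G and H be finite simple graphs and let A be a unital (not necessarily commutative) ring. Let p : V(G) → V(H) → A be a family of elements such that for every x ∈ V(G) one has ∑_{y ∈ V(H)} p x y = 1, and such that p x a · p x' a' = 0 whenever x is adjacent to x' in G and a is not adjacent to a' in H. If u, u' ∈ V(G) are joined by a walk of length ℓ ≥ 1 in G, and v, v' ∈ V(H) are joined by no walk of length ℓ in H, then p u v · p u' v' = 0. -/
/-!
Induct on the walk `u ~ x ~ ⋯ ~ u'` in `G`. Inserting `1 = ∑ a, p x a` gives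
`p u v * p u' v' = ∑ a, p u v * p x a * p u' v'`; the term for `a` vanishes by the
relation when `v ≁ a`, and by induction when `v ~ a`, since then `H` has no walk of
length `ℓ - 1` from `a` to `v'`.
-/

namespace SimpleGraph

variable {V W A : Type*} [Fintype W] [Ring A] {G : SimpleGraph V} {H : SimpleGraph W}
  {p : V → W → A}

theorem mul_eq_zero_of_walk (hsum : ∀ x, ∑ y, p x y = 1)
    (hrel : ∀ x x' a a', G.Adj x x' → ¬ H.Adj a a' → p x a * p x' a' = 0) :
    ∀ {u u' : V} (w : G.Walk u u') {v v' : W}, w.length ≠ 0 →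
      (∀ w' : H.Walk v v', w'.length ≠ w.length) → p u v * p u' v' = 0
  | _, _, .nil, _, _, hw, _ => absurd rfl hw
  | _, _, .cons hux .nil, _, _, _, hno =>
      hrel _ _ _ _ hux fun hvv' => hno (.cons hvv' .nil) rfl
  | u, u', .cons (v := x) hux (.cons hxy w), v, v', _, hno => by
      calc p u v * p u' v' = ∑ a, p u v * p x a * p u' v' := by
            rw [← Finset.sum_mul, ← Finset.mul_sum, hsum, mul_one]
        _ = 0 := Finset.sum_eq_zero fun a _ => by
            by_cases hva : H.Adj v a
            · have hno' : ∀ w' : H.Walk a v', w'.length ≠ (w.cons hxy).length :=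
                fun w' hw' => hno (.cons hva w') (by simp [hw'])
              rw [mul_assoc, mul_eq_zero_of_walk hsum hrel (.cons hxy w) (by simp) hno',
                mul_zero]
            · rw [hrel u x v a hux hva, zero_mul]

end SimpleGraph

theorem stmt0_general {V W : Type*} [Fintype W]
    (G : SimpleGraph V) (H : SimpleGraph W)
    {A : Type*} [Ring A] (p : V → W → A)
    (hsum : ∀ x : V, ∑ y : W, p x y = 1)
    (hrel : ∀ (x x' : V) (a a' : W), G.Adj x x' → ¬ H.Adj a a' → p x a * p x' a' = 0)
    (u u' : V) (v v' : W) (ℓ : ℕ) (hℓ : 1 ≤ ℓ)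
    (hwalk : ∃ w : G.Walk u u', w.length = ℓ)
    (hnowalk : ¬ ∃ w : H.Walk v v', w.length = ℓ) :
    p u v * p u' v' = 0 := by
  obtain ⟨w, rfl⟩ := hwalk
  exact SimpleGraph.mul_eq_zero_of_walk hsum hrel w (by omega) fun w' hw' => hnowalk ⟨w', hw'⟩

/-- If `p : V(G) → V(H) → A` satisfies the relations of the quantum
homomorphism space `Mor⁺(G,H)` (rows are "PVM-like": sum to 1; and
`p x a * p x' a' = 0` whenever `x ~ x'` in `G` but `a ≁ a'` in `H`), and there is a
walk of length `ℓ ≥ 1` from `u` to `u'` in `G` but no walk of length `ℓ` from `v`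
to `v'` in `H`, then `p u v * p u' v' = 0`. -/
theorem stmt0 {V W : Type*} [Fintype V] [Fintype W]
    (G : SimpleGraph V) (H : SimpleGraph W)
    {A : Type*} [Ring A] (p : V → W → A)
    (hsum : ∀ x : V, ∑ y : W, p x y = 1)
    (hrel : ∀ (x x' : V) (a a' : W), G.Adj x x' → ¬ H.Adj a a' → p x a * p x' a' = 0)
    (u u' : V) (v v' : W) (ℓ : ℕ) (hℓ : 1 ≤ ℓ)
    (hwalk : ∃ w : G.Walk u u', w.length = ℓ)
    (hnowalk : ¬ ∃ w : H.Walk v v', w.length = ℓ) :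
    p u v * p u' v' = 0 :=
  stmt0_general G H p hsum hrel u u' v v' ℓ hℓ hwalk hnowalk
end

section
/- Let A be a unital C*-algebra, let n ∈ ℕ, and let q : Fin n → Fin n → A be a family of projections such that ∑_{a,b} q a b = n • 1 and q a b · q a b' = 0 for every a and all b ≠ b'. Then ∑_b q a b = 1 for every a ∈ Fin n. -/
/-!
Each row sum `p a = ∑ b, q a b` is a sum of pairwise orthogonal projections, hence a projection,
so `1 - p a` is a projection and in particular positive in the spectral order. The hypothesis on
the total sum says `∑ a, (1 - p a) = 0`, and a vanishing sum of positive elements has all of its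
terms zero.
-/

theorem IsStarProjection.sum_of_orthogonalIdempotents {R ι : Type*} [Semiring R] [StarRing R]
    {e : ι → R} (he : OrthogonalIdempotents e) (hsa : ∀ i, IsSelfAdjoint (e i)) (s : Finset ι) :
    IsStarProjection (∑ i ∈ s, e i) :=
  ⟨he.isIdempotentElem_sum, isSelfAdjoint_sum s fun i _ ↦ hsa i⟩

theorem IsStarProjection.eq_one_of_sum_eq_card {R ι : Type*} [Ring R] [PartialOrder R]
    [StarRing R] [StarOrderedRing R] [Fintype ι] {p : ι → R} (hp : ∀ i, IsStarProjection (p i))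
    (hsum : ∑ i, p i = Fintype.card ι • (1 : R)) (i : ι) : p i = 1 := by
  have hcompl : ∑ j, (1 - p j) = 0 := by
    simp [Finset.sum_sub_distrib, hsum]
  have hzero := (Finset.sum_eq_zero_iff_of_nonneg fun j _ ↦ (hp j).one_sub_nonneg).mp hcompl i
    (Finset.mem_univ i)
  exact (sub_eq_zero.mp hzero).symm

/-- In a unital C*-algebra, if `q : Fin n → Fin n → A` is a family of
projections with `∑_{a,b} q a b = n • 1` and `q a b * q a b' = 0` for `b ≠ b'`,
then each row sums to `1`. -/
theorem stmt1 {A : Type*} [CStarAlgebra A] (n : ℕ)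
    (q : Fin n → Fin n → A)
    (hproj : ∀ a b, star (q a b) = q a b ∧ q a b * q a b = q a b)
    (hsum : ∑ a : Fin n, ∑ b : Fin n, q a b = n • (1 : A))
    (horth : ∀ (a : Fin n) (b b' : Fin n), b ≠ b' → q a b * q a b' = 0) :
    ∀ a : Fin n, ∑ b : Fin n, q a b = 1 := by
  let _ : PartialOrder A := CStarAlgebra.spectralOrder A
  have : StarOrderedRing A := CStarAlgebra.spectralOrderedRing A
  have hrow : ∀ a, IsStarProjection (∑ b, q a b) := fun a ↦
    IsStarProjection.sum_of_orthogonalIdempotents ⟨fun b ↦ (hproj a b).2, horth a⟩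
      (fun b ↦ (hproj a b).1) Finset.univ
  exact IsStarProjection.eq_one_of_sum_eq_card hrow (by rwa [Fintype.card_fin])
end

section
/- Let k ≥ 2 and let C̄_{2k} denote the complement of the cycle graph on ZMod (2k), i.e. x and y are adjacent iff x ≠ y, y ≠ x+1 and y ≠ x−1. Let A be a unital C*-algebra and let p : ZMod (2k) → ZMod k → A be a family of projections such that: (a) ∑_{b ∈ ZMod k} p x b = 1 for every x; (b) p x b · p x' b = 0 whenever x and x' are adjacent in C̄_{2k}; (c) p x b and p x' b' commute whenever x and x' are adjacent in C̄_{2k}. Then for every integer a and all b, c ∈ ZMod k, the commutator [p (2a) b, p (2a+1) c] equals [p 0 b, p 1 c], where 2a and 2a+1 are taken in ZMod (2k). -/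
/-- Adjacency in the complement `C̄ₘ` of the cycle graph on `ZMod m`:
`x ~ y` iff `x ≠ y`, `y ≠ x + 1` and `y ≠ x - 1`. -/
def cycleComplAdj (m : ℕ) (x y : ZMod m) : Prop :=
  x ≠ y ∧ y ≠ x + 1 ∧ y ≠ x - 1

section Aux

variable {k : ℕ} [NeZero k]

private lemma aux_two_k_ne : (2 * k : ℕ) ≠ 0 := by
  have := NeZero.ne k; omega

private lemma aux_odd_ne_zero {d : ℤ} (hd : Odd d) : (d : ZMod (2 * k)) ≠ 0 := by
  haveI : NeZero (2 * k) := ⟨aux_two_k_ne⟩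
  rw [Ne, ZMod.intCast_zmod_eq_zero_iff_dvd]
  intro h
  have h2 : (2 : ℤ) ∣ d := dvd_trans ⟨(k : ℤ), by push_cast; ring⟩ h
  obtain ⟨t, ht⟩ := hd
  obtain ⟨s, hs⟩ := h2
  omega

private lemma aux_small_ne_zero {d : ℤ} (h1 : d ≠ 0) (h2 : |d| < 2 * (k : ℤ)) :
    (d : ZMod (2 * k)) ≠ 0 := by
  haveI : NeZero (2 * k) := ⟨aux_two_k_ne⟩
  rw [Ne, ZMod.intCast_zmod_eq_zero_iff_dvd]
  intro h
  exact h1 (Int.eq_zero_of_abs_lt_dvd h (by push_cast at h2 ⊢; omega))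

private lemma aux_zmod_ne {u v : ZMod (2 * k)} (d : ℤ) (hd : (d : ZMod (2 * k)) ≠ 0)
    (h : v - u = (d : ZMod (2 * k))) : u ≠ v := by
  intro he
  exact hd (by rw [← h, he, sub_self])

/-- The even (or odd) parity class through `x` is a clique in the cycle complement. -/
private lemma aux_adj_clique (x : ZMod (2 * k)) {i j : Fin k} (hij : i ≠ j) :
    cycleComplAdj (2 * k) (x + 2 * ((i : ℕ) : ZMod (2 * k)))
      (x + 2 * ((j : ℕ) : ZMod (2 * k))) := by
  have hne : (i : ℕ) ≠ (j : ℕ) := fun h => hij (Fin.ext h)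
  have hi := i.isLt
  have hj := j.isLt
  refine ⟨aux_zmod_ne (2 * (j : ℕ) - 2 * (i : ℕ)) (aux_small_ne_zero (by omega)
      (by rw [abs_lt]; omega)) (by push_cast; ring),
    aux_zmod_ne (2 * (i : ℕ) + 1 - 2 * (j : ℕ)) (aux_odd_ne_zero ⟨(i : ℕ) - (j : ℕ), by ring⟩)
      (by push_cast; ring),
    aux_zmod_ne (2 * (i : ℕ) - 1 - 2 * (j : ℕ))
      (aux_odd_ne_zero ⟨(i : ℕ) - (j : ℕ) - 1, by ring⟩) (by push_cast; ring)⟩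

/-- A clique vertex `y - 1 + 2j` with `2 ≤ j ≤ k-1` is adjacent to `y` in the complement. -/
private lemma aux_adj_mid (y : ZMod (2 * k)) {j : Fin k} (hj : 2 ≤ (j : ℕ)) :
    cycleComplAdj (2 * k) (y - 1 + 2 * ((j : ℕ) : ZMod (2 * k))) y := by
  have hjk := j.isLt
  refine ⟨aux_zmod_ne (1 - 2 * (j : ℕ)) (aux_odd_ne_zero ⟨-(j : ℕ), by ring⟩)
      (by push_cast; ring),
    aux_zmod_ne (2 * (j : ℕ)) (aux_small_ne_zero (by omega) (by rw [abs_lt]; omega))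
      (by push_cast; ring),
    aux_zmod_ne (2 * (j : ℕ) - 2) (aux_small_ne_zero (by omega) (by rw [abs_lt]; omega))
      (by push_cast; ring)⟩

variable {A : Type*} [CStarAlgebra A]

/-- For each color `b` and each parity class, the clique projections sum to `1`. -/
private lemma aux_clique_sum (p : ZMod (2 * k) → ZMod k → A)
    (hproj : ∀ x b, star (p x b) = p x b ∧ p x b * p x b = p x b)
    (hsum : ∀ x, ∑ b : ZMod k, p x b = 1)
    (horth : ∀ (x x' : ZMod (2 * k)) (b : ZMod k),
      cycleComplAdj (2 * k) x x' → p x b * p x' b = 0)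
    (x : ZMod (2 * k)) (b : ZMod k) :
    ∑ j : Fin k, p (x + 2 * ((j : ℕ) : ZMod (2 * k))) b = 1 := by
  letI := CStarAlgebra.spectralOrder A
  haveI := CStarAlgebra.spectralOrderedRing A
  set P : ZMod k → A := fun b' => ∑ j : Fin k, p (x + 2 * ((j : ℕ) : ZMod (2 * k))) b' with hP
  have hPsq : ∀ b', P b' * P b' = P b' := by
    intro b'
    rw [hP]
    simp only
    rw [Finset.sum_mul_sum]
    refine Finset.sum_congr rfl (fun i _ => ?_)
    rw [Finset.sum_eq_single i (fun j _ hji =>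
      horth _ _ b' (aux_adj_clique x (Ne.symm hji))) (by simp)]
    exact (hproj _ b').2
  have hPstar : ∀ b', star (P b') = P b' := by
    intro b'
    rw [hP]
    simp only [star_sum]
    exact Finset.sum_congr rfl fun j _ => (hproj _ b').1
  have hone : ∀ b', (1 : A) - P b' = star (1 - P b') * (1 - P b') := by
    intro b'
    have h1 : star ((1 : A) - P b') = 1 - P b' := by rw [star_sub, star_one, hPstar]
    rw [h1, mul_sub, mul_one, sub_mul, one_mul, hPsq]
    abel
  have hsumz : ∑ b' : ZMod k, ((1 : A) - P b') = 0 := by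
    rw [Finset.sum_sub_distrib]
    have h1 : ∑ b' : ZMod k, P b' = ∑ b' : ZMod k, (1 : A) := by
      rw [hP]
      simp only
      rw [Finset.sum_comm]
      calc ∑ j : Fin k, ∑ b' : ZMod k, p (x + 2 * ((j : ℕ) : ZMod (2 * k))) b'
          = ∑ j : Fin k, (1 : A) := Finset.sum_congr rfl fun j _ => hsum _
        _ = ∑ b' : ZMod k, (1 : A) := by
            simp [Finset.card_univ, ZMod.card]
    rw [h1, sub_self]
  have hzero : (1 : A) - P b = 0 :=
    (Finset.sum_eq_zero_iff_of_nonneg (fun i _ => by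
      rw [hone i]; exact star_mul_self_nonneg _)).mp hsumz b (Finset.mem_univ b)
  exact (sub_eq_zero.mp hzero).symm

/-- Key commutation: `p y c` commutes with `p (y+1) b + p (y-1) b`. -/
private lemma aux_keyK (hk : 2 ≤ k) (p : ZMod (2 * k) → ZMod k → A)
    (hproj : ∀ x b, star (p x b) = p x b ∧ p x b * p x b = p x b)
    (hsum : ∀ x, ∑ b : ZMod k, p x b = 1)
    (horth : ∀ (x x' : ZMod (2 * k)) (b : ZMod k),
      cycleComplAdj (2 * k) x x' → p x b * p x' b = 0)
    (hcomm : ∀ (x x' : ZMod (2 * k)) (b b' : ZMod k),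
      cycleComplAdj (2 * k) x x' → p x b * p x' b' = p x' b' * p x b)
    (y : ZMod (2 * k)) (b c : ZMod k) :
    p y c * (p (y + 1) b + p (y - 1) b) = (p (y + 1) b + p (y - 1) b) * p y c := by
  have hS := aux_clique_sum p hproj hsum horth (y - 1) b
  set f : Fin k → A := fun j => p (y - 1 + 2 * ((j : ℕ) : ZMod (2 * k))) b with hf
  set j0 : Fin k := ⟨0, by omega⟩ with hj0
  set j1 : Fin k := ⟨1, by omega⟩ with hj1
  set T : Finset (Fin k) := (Finset.univ.erase j0).erase j1 with hT
  have hmem1 : j1 ∈ Finset.univ.erase j0 :=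
    Finset.mem_erase.mpr ⟨by simp [hj0, hj1, Fin.ext_iff], Finset.mem_univ _⟩
  have hsplit : ∑ j : Fin k, f j = f j0 + (f j1 + ∑ j ∈ T, f j) := by
    rw [← Finset.add_sum_erase _ f (Finset.mem_univ j0), ← Finset.add_sum_erase _ f hmem1]
  have e0 : f j0 = p (y - 1) b := by
    simp only [hf, hj0]
    norm_num
  have e1 : f j1 = p (y + 1) b := by
    simp only [hf, hj1]
    have : y - 1 + 2 * ((1 : ℕ) : ZMod (2 * k)) = y + 1 := by push_cast; ring
    rw [this]
  have hTcomm : ∀ j ∈ T, p y c * f j = f j * p y c := by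
    intro j hj
    have hj2 : 2 ≤ (j : ℕ) := by
      rw [hT, Finset.mem_erase, Finset.mem_erase] at hj
      have h1 : j ≠ j1 := hj.1
      have h0 : j ≠ j0 := hj.2.1
      have : (j : ℕ) ≠ 0 := fun h => h0 (Fin.ext (by simpa [hj0] using h))
      have : (j : ℕ) ≠ 1 := fun h => h1 (Fin.ext (by simpa [hj1] using h))
      omega
    exact (hcomm _ y b c (aux_adj_mid y hj2)).symm
  have hSsplit : p (y - 1) b + (p (y + 1) b + ∑ j ∈ T, f j) = 1 := by
    rw [← e0, ← e1, ← hsplit, hS]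
  have hTsum : p y c * (∑ j ∈ T, f j) = (∑ j ∈ T, f j) * p y c := by
    rw [Finset.mul_sum, Finset.sum_mul]
    exact Finset.sum_congr rfl hTcomm
  have hrest : p (y + 1) b + p (y - 1) b = 1 - ∑ j ∈ T, f j := by
    rw [← hSsplit]; abel
  rw [hrest, mul_sub, sub_mul, mul_one, one_mul, hTsum]

end Aux

/-- Let `k ≥ 2` and let `p : ZMod (2k) → ZMod k → A` be a family of
projections in a unital C*-algebra satisfying the relations of the oracular
quantum homomorphism space `Mor^{o+}(C̄_{2k}, K_k)`.  Then for every integer `a`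
and all `b c : ZMod k`, the commutator `[p (2a) b, p (2a+1) c]` equals
`[p 0 b, p 1 c]`. -/
theorem stmt3 {A : Type*} [CStarAlgebra A] (k : ℕ) [NeZero k] (hk : 2 ≤ k)
    (p : ZMod (2 * k) → ZMod k → A)
    (hproj : ∀ x b, star (p x b) = p x b ∧ p x b * p x b = p x b)
    (hsum : ∀ x, ∑ b : ZMod k, p x b = 1)
    (horth : ∀ (x x' : ZMod (2 * k)) (b : ZMod k),
      cycleComplAdj (2 * k) x x' → p x b * p x' b = 0)
    (hcomm : ∀ (x x' : ZMod (2 * k)) (b b' : ZMod k),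
      cycleComplAdj (2 * k) x x' → p x b * p x' b' = p x' b' * p x b) :
    ∀ (a : ℤ) (b c : ZMod k),
      p ((2 * a : ℤ) : ZMod (2 * k)) b * p ((2 * a + 1 : ℤ) : ZMod (2 * k)) c
        - p ((2 * a + 1 : ℤ) : ZMod (2 * k)) c * p ((2 * a : ℤ) : ZMod (2 * k)) b
      = p 0 b * p 1 c - p 1 c * p 0 b := by
  intro a b c
  set g : ZMod (2 * k) → A :=
    fun x => p x b * p (x + 1) c - p (x + 1) c * p x b with hg
  -- the transport step
  have step : ∀ x : ZMod (2 * k), g x = g (x + 2) := by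
    intro x
    have h1 := aux_keyK hk p hproj hsum horth hcomm (x + 1) b c
    have h2 := aux_keyK hk p hproj hsum horth hcomm (x + 2) c b
    have e11 : x + 1 + 1 = x + 2 := by ring
    have e12 : x + 1 - 1 = x := by ring
    have e21 : x + 2 + 1 = x + 3 := by ring
    have e22 : x + 2 - 1 = x + 1 := by ring
    rw [e11, e12] at h1
    rw [e21, e22] at h2
    -- h1 : p (x+1) c * (p (x+2) b + p x b) = (p (x+2) b + p x b) * p (x+1) c
    -- h2 : p (x+2) b * (p (x+3) c + p (x+1) c) = (p (x+3) c + p (x+1) c) * p (x+2) b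
    have h1' : p (x + 1) c * p (x + 2) b + p (x + 1) c * p x b
        - (p (x + 2) b * p (x + 1) c + p x b * p (x + 1) c) = 0 := by
      rw [← mul_add, ← add_mul, h1, sub_self]
    have h2' : p (x + 2) b * p (x + 3) c + p (x + 2) b * p (x + 1) c
        - (p (x + 3) c * p (x + 2) b + p (x + 1) c * p (x + 2) b) = 0 := by
      rw [← mul_add, ← add_mul, h2, sub_self]
    have hgoal : g x - g (x + 2)
        = -(p (x + 1) c * p (x + 2) b + p (x + 1) c * p x b
            - (p (x + 2) b * p (x + 1) c + p x b * p (x + 1) c))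
          - (p (x + 2) b * p (x + 3) c + p (x + 2) b * p (x + 1) c
            - (p (x + 3) c * p (x + 2) b + p (x + 1) c * p (x + 2) b)) := by
      rw [hg]
      simp only
      rw [e21]
      abel
    have h3 : g x - g (x + 2) = 0 := by rw [hgoal, h1', h2']; abel
    exact sub_eq_zero.mp h3
  have main : ∀ a : ℤ, g (((2 * a : ℤ) : ZMod (2 * k))) = g 0 := by
    intro a
    induction a using Int.induction_on with
    | zero => norm_num
    | succ n ih =>
        have e : ((2 * ((n : ℤ) + 1) : ℤ) : ZMod (2 * k))
            = ((2 * (n : ℤ) : ℤ) : ZMod (2 * k)) + 2 := by push_cast; ring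
        rw [e, ← step, ih]
    | pred n ih =>
        have e : ((2 * (-(n : ℤ) - 1) : ℤ) : ZMod (2 * k))
            = ((2 * (-(n : ℤ)) : ℤ) : ZMod (2 * k)) - 2 := by push_cast; ring
        have e2 : ((2 * (-(n : ℤ)) : ℤ) : ZMod (2 * k)) - 2 + 2
            = ((2 * (-(n : ℤ)) : ℤ) : ZMod (2 * k)) := by ring
        rw [e, step, e2, ih]
  have hcast : ((2 * a + 1 : ℤ) : ZMod (2 * k)) = ((2 * a : ℤ) : ZMod (2 * k)) + 1 := by
    push_cast; ring
  have hfin := main a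
  rw [hg] at hfin
  simp only at hfin
  rw [zero_add] at hfin
  rw [hcast]
  exact hfin
end

section
/- Let k ≥ 3 and let C̄_{2k} denote the complement of the cycle graph on ZMod (2k), i.e. x and y are adjacent iff x ≠ y, y ≠ x+1 and y ≠ x−1. Let A be a unital C*-algebra and let p : ZMod (2k) → ZMod k → A be a family of projections such that: (a) ∑_{b ∈ ZMod k} p x b = 1 for every x; (b) p x b · p x' b = 0 whenever x and x' are adjacent in C̄_{2k}; (c) p x b and p x' b' commute whenever x and x' are adjacent in C̄_{2k}. Then p 0 b and p 1 c commute for all b, c ∈ ZMod k. -/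
/-!
The vertices at even distance from a vertex form a `k`-clique of `C̄_{2k}`. On a `k`-clique the
projections of one colour are pairwise orthogonal, and summing over the `k` colours gives `k • 1`;
since each such sum is a projection, hence `≤ 1`, each of them equals `1`. Multiplying `p x c` by
this identity for the clique through `x + 1` kills everything but the two cycle neighbours:
`p x c = p x c * p (x + 1) c + p x c * p (x - 1) c`. Feeding this decomposition into itself shows
that `p x c * p (x + 1) c = p x c * p (x + 1) c * p x c`, which is self-adjoint, so the two
projections commute. For different colours `b ≠ c` the decompositions at `0` and `-1` give
`p 0 b * p 1 c = p 0 b * p 1 c * p 0 b * p (-1) b`; as `p (-1) b` commutes with `p 0 b`, this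
again yields `p 0 b * p 1 c * p 0 b = p 0 b * p 1 c`.
-/

open Finset

theorem IsStarProjection.mul_eq_zero_of_add_le_one {A : Type*} [CStarAlgebra A] [PartialOrder A]
    [StarOrderedRing A] {p q : A} (hp : IsStarProjection p) (hq : IsStarProjection q)
    (h : p + q ≤ 1) : p * q = 0 := by
  have h' := (hq.one_sub.mul_right_and_mul_left_of_nonneg_of_le hp.nonneg
    (le_sub_iff_add_le.mpr h)).1
  rwa [mul_sub, mul_one, sub_eq_self] at h'

theorem IsStarProjection.mul_eq_zero_of_sum_eq_one {A ι : Type*} [CStarAlgebra A] [PartialOrder A]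
    [StarOrderedRing A] [Fintype ι] {q : ι → A} (hq : ∀ i, IsStarProjection (q i))
    (hsum : ∑ i, q i = 1) {i j : ι} (hij : i ≠ j) : q i * q j = 0 := by
  classical
  refine (hq i).mul_eq_zero_of_add_le_one (hq j) ?_
  rw [← hsum, ← sum_pair hij]
  exact sum_le_sum_of_subset_of_nonneg (subset_univ _) fun l _ _ => (hq l).nonneg

theorem IsStarProjection.sum {R ι : Type*} [NonUnitalSemiring R] [StarRing R] {s : Finset ι}
    {q : ι → R} (hq : ∀ i ∈ s, IsStarProjection (q i))
    (horth : (s : Set ι).Pairwise fun i j => q i * q j = 0) :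
    IsStarProjection (∑ i ∈ s, q i) := by
  classical
  induction s using Finset.induction_on with
  | empty => rw [sum_empty]; exact .zero R
  | insert a s ha ih =>
    rw [coe_insert] at horth
    rw [sum_insert ha]
    refine (hq a (mem_insert_self a s)).add
      (ih (fun i hi => hq i (mem_insert_of_mem hi)) (horth.mono (Set.subset_insert a _))) ?_
    rw [Finset.mul_sum]
    exact sum_eq_zero fun j hj =>
      horth (Set.mem_insert a _) (Set.mem_insert_of_mem a hj) (ne_of_mem_of_not_mem hj ha).symm

theorem IsStarProjection.commute_of_mul_eq_mul_mul {R : Type*} [Semigroup R] [StarMul R] {p q : R}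
    (hp : IsStarProjection p) (hq : IsStarProjection q) (h : p * q = p * q * p) :
    Commute p q := by
  have hsa : IsSelfAdjoint (p * q * p) := by
    simp only [IsSelfAdjoint, star_mul, hp.isSelfAdjoint.star_eq, hq.isSelfAdjoint.star_eq,
      mul_assoc]
  calc p * q = p * q * p := h
    _ = star (p * q * p) := hsa.star_eq.symm
    _ = star (p * q) := by rw [← h]
    _ = q * p := by rw [star_mul, hp.isSelfAdjoint.star_eq, hq.isSelfAdjoint.star_eq]

theorem sum_eq_one_of_pairwise_of_card_eq {R V ι : Type*} [Ring R] [PartialOrder R] [StarRing R]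
    [StarOrderedRing R] [Fintype ι] {r : V → V → Prop} {p : V → ι → R}
    (hproj : ∀ y c, IsStarProjection (p y c)) (hsum : ∀ y, ∑ c, p y c = 1)
    (horth : ∀ y z c, r y z → p y c * p z c = 0) {K : Finset V}
    (hK : (K : Set V).Pairwise r) (hcard : #K = Fintype.card ι) (c : ι) :
    ∑ y ∈ K, p y c = 1 := by
  have hQ : ∀ c, IsStarProjection (∑ y ∈ K, p y c) := fun c =>
    .sum (fun y _ => hproj y c) (hK.mono' fun y z hyz => horth y z c hyz)
  have htotal : ∑ c, ∑ y ∈ K, p y c = ∑ _c : ι, (1 : R) := by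
    rw [sum_comm]; simp [hsum, hcard]
  exact (sum_eq_sum_iff_of_le fun c _ => (hQ c).le_one).mp htotal c (mem_univ c)

theorem cycleComplAdj_iff_sub {m : ℕ} {x y : ZMod m} :
    cycleComplAdj m x y ↔ y - x ≠ 0 ∧ y - x ≠ 1 ∧ y - x ≠ -1 := by
  unfold cycleComplAdj
  grind

theorem cycleComplAdj_symm {m : ℕ} {x y : ZMod m} (h : cycleComplAdj m x y) :
    cycleComplAdj m y x := by
  unfold cycleComplAdj at h ⊢
  grind

theorem cycleComplAdj_of_sub_eq_natCast {m v : ℕ} {x y : ZMod m} (hv : 2 ≤ v)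
    (hvm : v + 2 ≤ m) (h : y - x = v) : cycleComplAdj m x y := by
  have hcast : ∀ a b : ℕ, a < m → b < m → a ≠ b → (a : ZMod m) ≠ b :=
    fun a b ha hb hab h => by
      rw [ZMod.natCast_eq_natCast_iff', Nat.mod_eq_of_lt ha, Nat.mod_eq_of_lt hb] at h
      exact hab h
  rw [cycleComplAdj_iff_sub, h]
  refine ⟨by exact_mod_cast hcast v 0 (by omega) (by omega) (by omega),
    by exact_mod_cast hcast v 1 (by omega) (by omega) (by omega), fun h1 => ?_⟩
  refine hcast (v + 1) 0 (by omega) (by omega) (by omega) ?_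
  push_cast; rw [h1]; ring

theorem two_mul_add_one_ne_two_mul (k : ℕ) (d e : ZMod (2 * k)) : 2 * d + 1 ≠ 2 * e := by
  intro h
  have h2 := congrArg (ZMod.castHom (dvd_mul_right 2 k) (ZMod 2)) h
  rw [map_add, map_mul, map_mul, map_ofNat, map_one,
    show (2 : ZMod 2) = 0 from rfl, zero_mul, zero_mul, zero_add] at h2
  exact one_ne_zero h2

def parityClass (k : ℕ) (x : ZMod (2 * k)) : Finset (ZMod (2 * k)) :=
  (range k).image fun i : ℕ => x + 2 * (i : ZMod (2 * k))

theorem parityClass_pairwise (k : ℕ) (x : ZMod (2 * k)) :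
    (parityClass k x : Set (ZMod (2 * k))).Pairwise (cycleComplAdj (2 * k)) := by
  intro y hy z hz hyz
  simp only [parityClass, coe_image, Set.mem_image] at hy hz
  obtain ⟨i, -, rfl⟩ := hy
  obtain ⟨j, -, rfl⟩ := hz
  rw [cycleComplAdj_iff_sub]
  refine ⟨sub_ne_zero.mpr hyz.symm, fun h => ?_, fun h => ?_⟩
  · exact two_mul_add_one_ne_two_mul k 0 (j - i) (by linear_combination -h)
  · exact two_mul_add_one_ne_two_mul k (-1) (j - i) (by linear_combination -h)

theorem card_parityClass (k : ℕ) (x : ZMod (2 * k)) : #(parityClass k x) = k := by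
  rw [parityClass, card_image_of_injOn, card_range]
  intro i hi j hj hij
  simp only [coe_range, Set.mem_Iio] at hi hj
  have : ((2 * i : ℕ) : ZMod (2 * k)) = (2 * j : ℕ) := by
    push_cast; exact add_left_cancel hij
  rw [ZMod.natCast_eq_natCast_iff', Nat.mod_eq_of_lt (by omega),
    Nat.mod_eq_of_lt (by omega)] at this
  omega

theorem self_mem_parityClass {k : ℕ} (hk : 0 < k) (x : ZMod (2 * k)) : x ∈ parityClass k x :=
  mem_image.mpr ⟨0, mem_range.mpr hk, by simp⟩

theorem sub_one_mem_parityClass_add_one {k : ℕ} (hk : 0 < k) (x : ZMod (2 * k)) :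
    x - 1 ∈ parityClass k (x + 1) := by
  refine mem_image.mpr ⟨k - 1, mem_range.mpr (by omega), ?_⟩
  have h2k : (2 * k : ZMod (2 * k)) = 0 := by exact_mod_cast ZMod.natCast_self (2 * k)
  rw [Nat.cast_pred hk]
  linear_combination h2k

theorem cycleComplAdj_of_mem_parityClass_add_one {k : ℕ} {x y : ZMod (2 * k)}
    (hy : y ∈ parityClass k (x + 1)) (h1 : y ≠ x + 1) (h2 : y ≠ x - 1) :
    cycleComplAdj (2 * k) x y := by
  obtain ⟨i, -, rfl⟩ := mem_image.mp hy
  exact ⟨fun h => two_mul_add_one_ne_two_mul k i 0 (by linear_combination -h), h1, h2⟩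

section

variable {R : Type*} [Ring R] {k : ℕ} {p : ZMod (2 * k) → ZMod k → R}

theorem eq_mul_add_one_add_mul_sub_one (hk : 2 ≤ k)
    (horth : ∀ x x' b, cycleComplAdj (2 * k) x x' → p x b * p x' b = 0)
    (hclique : ∀ x c, ∑ y ∈ parityClass k x, p y c = 1) (x : ZMod (2 * k)) (c : ZMod k) :
    p x c = p x c * p (x + 1) c + p x c * p (x - 1) c := by
  have hne : x + 1 ≠ x - 1 := fun h => by
    have h2 : ((2 : ℕ) : ZMod (2 * k)) = 0 := by push_cast; linear_combination h
    have := Nat.le_of_dvd two_pos ((ZMod.natCast_eq_zero_iff 2 (2 * k)).mp h2)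
    omega
  have hsub : {x + 1, x - 1} ⊆ parityClass k (x + 1) := insert_subset_iff.mpr
    ⟨self_mem_parityClass (by omega) _,
      singleton_subset_iff.mpr (sub_one_mem_parityClass_add_one (by omega) x)⟩
  have hzero : ∀ y ∈ parityClass k (x + 1), y ∉ ({x + 1, x - 1} : Finset _) →
      p x c * p y c = 0 := fun y hy hyT => by
    simp only [mem_insert, mem_singleton, not_or] at hyT
    exact horth x y c (cycleComplAdj_of_mem_parityClass_add_one hy hyT.1 hyT.2)
  calc p x c = p x c * ∑ y ∈ parityClass k (x + 1), p y c := by rw [hclique, mul_one]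
    _ = ∑ y ∈ parityClass k (x + 1), p x c * p y c := mul_sum _ _ _
    _ = ∑ y ∈ {x + 1, x - 1}, p x c * p y c := (sum_subset hsub hzero).symm
    _ = p x c * p (x + 1) c + p x c * p (x - 1) c := sum_pair hne

variable [StarRing R]

theorem eq_add_one_mul_add_sub_one_mul (hk : 2 ≤ k) (hproj : ∀ x b, IsStarProjection (p x b))
    (horth : ∀ x x' b, cycleComplAdj (2 * k) x x' → p x b * p x' b = 0)
    (hclique : ∀ x c, ∑ y ∈ parityClass k x, p y c = 1) (x : ZMod (2 * k)) (c : ZMod k) :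
    p x c = p (x + 1) c * p x c + p (x - 1) c * p x c := by
  simpa only [star_add, star_mul, (hproj _ _).isSelfAdjoint.star_eq] using
    congrArg star (eq_mul_add_one_add_mul_sub_one hk horth hclique x c)

theorem commute_add_one (hk : 3 ≤ k) (hproj : ∀ x b, IsStarProjection (p x b))
    (horth : ∀ x x' b, cycleComplAdj (2 * k) x x' → p x b * p x' b = 0)
    (hclique : ∀ x c, ∑ y ∈ parityClass k x, p y c = 1) (x : ZMod (2 * k)) (c : ZMod k) :
    Commute (p x c) (p (x + 1) c) := by
  set P := p x c
  set Q := p (x + 1) c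
  set L := p (x - 1) c
  set S := p (x + 1 + 1) c
  have hP : P * Q = P - P * L :=
    eq_sub_of_add_eq (eq_mul_add_one_add_mul_sub_one (by omega) horth hclique x c).symm
  have hQ : Q = Q * S + Q * P := by
    simpa only [add_sub_cancel_right] using
      eq_mul_add_one_add_mul_sub_one (by omega) horth hclique (x + 1) c
  have hPS : P * S = 0 :=
    horth _ _ c (cycleComplAdj_of_sub_eq_natCast (v := 2) le_rfl (by omega) (by push_cast; ring))
  have hLS : L * S = 0 :=
    horth _ _ c
      (cycleComplAdj_of_sub_eq_natCast (v := 3) (by omega) (by omega) (by push_cast; ring))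
  refine (hproj x c).commute_of_mul_eq_mul_mul (hproj (x + 1) c) ?_
  calc P * Q = P * (Q * S + Q * P) := by rw [← hQ]
    _ = P * Q * S + P * Q * P := by noncomm_ring
    _ = P * S - P * (L * S) + P * Q * P := by rw [hP]; noncomm_ring
    _ = P * Q * P := by rw [hPS, hLS]; noncomm_ring

theorem commute_zero_one_of_ne (hk : 3 ≤ k) (hproj : ∀ x b, IsStarProjection (p x b))
    (hvert : ∀ x b c, b ≠ c → p x b * p x c = 0)
    (horth : ∀ x x' b, cycleComplAdj (2 * k) x x' → p x b * p x' b = 0)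
    (hcomm : ∀ x x' b b', cycleComplAdj (2 * k) x x' → p x b * p x' b' = p x' b' * p x b)
    (hclique : ∀ x c, ∑ y ∈ parityClass k x, p y c = 1) {b c : ZMod k} (hbc : b ≠ c) :
    Commute (p 0 b) (p 1 c) := by
  set P := p 0 b
  set Q := p 1 c
  set L := p (-1) b
  set M := p (-2) b
  have hP : P = P * p 1 b + P * L := by
    simpa only [zero_add, zero_sub] using
      eq_mul_add_one_add_mul_sub_one (by omega) horth hclique 0 b
  have hL : L = P * L + M * L := by
    simpa only [neg_add_cancel, show (-1 - 1 : ZMod (2 * k)) = -2 by ring] using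
      eq_add_one_mul_add_sub_one_mul (by omega) hproj horth hclique (-1) b
  have hLP : L * P = P * L := by
    simpa only [neg_add_cancel] using (commute_add_one hk hproj horth hclique (-1) b).eq
  have hLQ : L * Q = Q * L :=
    hcomm _ _ b c (cycleComplAdj_of_sub_eq_natCast (v := 2) le_rfl (by omega) (by push_cast; ring))
  have hMQ : M * Q = Q * M :=
    hcomm _ _ b c
      (cycleComplAdj_of_sub_eq_natCast (v := 3) (by omega) (by omega) (by push_cast; ring))
  have hPM : P * M = 0 := horth _ _ b (cycleComplAdj_symm
    (cycleComplAdj_of_sub_eq_natCast (v := 2) le_rfl (by omega) (by push_cast; ring)))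
  have h1 : P * Q = P * Q * L := calc
    P * Q = (P * p 1 b + P * L) * Q := by rw [← hP]
    _ = P * (p 1 b * Q) + P * (L * Q) := by noncomm_ring
    _ = P * Q * L := by rw [hvert 1 b c hbc, hLQ]; noncomm_ring
  have h2 : P * Q = P * Q * P * L := calc
    P * Q = P * Q * (P * L + M * L) := by rw [← hL, ← h1]
    _ = P * Q * P * L + P * (M * Q) * L := by rw [hMQ]; noncomm_ring
    _ = P * Q * P * L := by rw [← mul_assoc P M, hPM]; noncomm_ring
  refine (hproj 0 b).commute_of_mul_eq_mul_mul (hproj 1 c) ?_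
  calc P * Q = P * Q * P * L := h2
    _ = P * Q * P * (P * L) := by
      rw [← mul_assoc (P * Q * P) P L, mul_assoc (P * Q) P P, (hproj 0 b).isIdempotentElem.eq]
    _ = P * Q * P * L * P := by rw [← hLP, ← mul_assoc]
    _ = P * Q * P := by rw [← h2]

end

/-- Let `k ≥ 3` and let `p : ZMod (2k) → ZMod k → A` be a family of
projections in a unital C*-algebra satisfying the relations of the oracular
quantum homomorphism space `Mor^{o+}(C̄_{2k}, K_k)`.  Then `p 0 b` and `p 1 c`
commute for all `b c : ZMod k`. -/
theorem stmt4 {A : Type*} [CStarAlgebra A] (k : ℕ) [NeZero k] (hk : 3 ≤ k)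
    (p : ZMod (2 * k) → ZMod k → A)
    (hproj : ∀ x b, star (p x b) = p x b ∧ p x b * p x b = p x b)
    (hsum : ∀ x, ∑ b : ZMod k, p x b = 1)
    (horth : ∀ (x x' : ZMod (2 * k)) (b : ZMod k),
      cycleComplAdj (2 * k) x x' → p x b * p x' b = 0)
    (hcomm : ∀ (x x' : ZMod (2 * k)) (b b' : ZMod k),
      cycleComplAdj (2 * k) x x' → p x b * p x' b' = p x' b' * p x b) :
    ∀ b c : ZMod k, p 0 b * p 1 c = p 1 c * p 0 b := by
  let := CStarAlgebra.spectralOrder A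
  have := CStarAlgebra.spectralOrderedRing A
  have hP : ∀ x b, IsStarProjection (p x b) := fun x b => ⟨(hproj x b).2, (hproj x b).1⟩
  have hvert : ∀ x b c, b ≠ c → p x b * p x c = 0 := fun x _ _ =>
    IsStarProjection.mul_eq_zero_of_sum_eq_one (hP x) (hsum x)
  have hclique : ∀ x c, ∑ y ∈ parityClass k x, p y c = 1 := fun x =>
    sum_eq_one_of_pairwise_of_card_eq hP hsum horth (parityClass_pairwise k x)
      (by rw [card_parityClass, ZMod.card])
  intro b c
  rcases eq_or_ne b c with rfl | hbc
  · simpa only [zero_add] using (commute_add_one hk hP horth hclique 0 b).eq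
  · exact (commute_zero_one_of_ne hk hP hvert horth hcomm hclique hbc).eq
end

section
/- For every k ≥ 1 and all a, b ∈ ZMod k, there exists a graph homomorphism f from C̄_{2k} (the complement of the cycle graph on ZMod (2k)) to the complete graph K_k on ZMod k such that f 0 = a and f 1 = b. -/
/-- The complement `C̄ₘ` of the cycle graph on `ZMod m`: `x ~ y` iff `x ≠ y`,
`y ≠ x + 1` and `y ≠ x - 1` (the last written as `x ≠ y + 1`). -/
def cycleComplement (m : ℕ) : SimpleGraph (ZMod m) where
  Adj x y := x ≠ y ∧ y ≠ x + 1 ∧ x ≠ y + 1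
  symm := by
    refine ⟨fun x y h => ?_⟩
    exact ⟨h.1.symm, h.2.2, h.2.1⟩
  loopless := by
    refine ⟨fun x h => ?_⟩
    exact h.1 rfl

/-- Auxiliary homomorphism: pair up consecutive vertices (with offset `t`)
and apply a permutation `σ`. -/
def pairHom (k t : ℕ) (hk : 1 ≤ k) (ht : t ≤ 1) (σ : Equiv.Perm (ZMod k)) :
    cycleComplement (2 * k) →g (⊤ : SimpleGraph (ZMod k)) where
  toFun x := σ (((x.val + t) / 2 : ℕ) : ZMod k)
  map_rel' := by
    haveI : NeZero (2 * k) := ⟨by omega⟩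
    intro x y h
    obtain ⟨h1, h2, h3⟩ := h
    simp only [SimpleGraph.top_adj]
    intro heq
    have hpq := σ.injective heq
    rw [ZMod.natCast_eq_natCast_iff'] at hpq
    set u := x.val with hu'
    set v := y.val with hv'
    have hu : u < 2 * k := ZMod.val_lt x
    have hv : v < 2 * k := ZMod.val_lt y
    have e1 : (u + t) / 2 % k = (u + t) / 2 ∨ ((u + t) / 2 = k ∧ (u + t) / 2 % k = 0) := by
      rcases lt_or_ge ((u + t) / 2) k with h | h
      · exact Or.inl (Nat.mod_eq_of_lt h)
      · refine Or.inr ⟨by omega, ?_⟩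
        have : (u + t) / 2 = k := by omega
        rw [this, Nat.mod_self]
    have e2 : (v + t) / 2 % k = (v + t) / 2 ∨ ((v + t) / 2 = k ∧ (v + t) / 2 % k = 0) := by
      rcases lt_or_ge ((v + t) / 2) k with h | h
      · exact Or.inl (Nat.mod_eq_of_lt h)
      · refine Or.inr ⟨by omega, ?_⟩
        have : (v + t) / 2 = k := by omega
        rw [this, Nat.mod_self]
    have hx : (u : ZMod (2 * k)) = x := ZMod.natCast_zmod_val x
    have hy : (v : ZMod (2 * k)) = y := ZMod.natCast_zmod_val y
    have hcases : u = v ∨ v = u + 1 ∨ u = v + 1 ∨ (u = 2 * k - 1 ∧ v = 0)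
        ∨ (v = 2 * k - 1 ∧ u = 0) := by
      rcases e1 with e1 | ⟨e1a, e1b⟩ <;> rcases e2 with e2 | ⟨e2a, e2b⟩ <;> omega
    have htop : ((2 * k : ℕ) : ZMod (2 * k)) = 0 := ZMod.natCast_self _
    rcases hcases with h | h | h | ⟨ha, hb⟩ | ⟨ha, hb⟩
    · exact h1 (by rw [← hx, ← hy, h])
    · refine h2 ?_
      rw [← hx, ← hy, h]
      push_cast
      ring
    · refine h3 ?_
      rw [← hx, ← hy, h]
      push_cast
      ring
    · refine h2 ?_
      rw [← hx, ← hy, ha, hb]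
      have key : ((2 * k - 1 : ℕ) : ZMod (2 * k)) + 1 = ((2 * k : ℕ) : ZMod (2 * k)) := by
        have h' : (2 * k - 1) + 1 = 2 * k := by omega
        calc ((2 * k - 1 : ℕ) : ZMod (2 * k)) + 1
            = (((2 * k - 1) + 1 : ℕ) : ZMod (2 * k)) := by push_cast; ring
          _ = ((2 * k : ℕ) : ZMod (2 * k)) := by rw [h']
      rw [key, htop]
      simp
    · refine h3 ?_
      rw [← hx, ← hy, ha, hb]
      have key : ((2 * k - 1 : ℕ) : ZMod (2 * k)) + 1 = ((2 * k : ℕ) : ZMod (2 * k)) := by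
        have h' : (2 * k - 1) + 1 = 2 * k := by omega
        calc ((2 * k - 1 : ℕ) : ZMod (2 * k)) + 1
            = (((2 * k - 1) + 1 : ℕ) : ZMod (2 * k)) := by push_cast; ring
          _ = ((2 * k : ℕ) : ZMod (2 * k)) := by rw [h']
      rw [key, htop]
      simp

/-- For every `k ≥ 1` and all `a b : ZMod k`, there is a graph
homomorphism `f : C̄_{2k} → K_k` with `f 0 = a` and `f 1 = b`. -/
theorem stmt5 (k : ℕ) (hk : 1 ≤ k) (a b : ZMod k) :
    ∃ f : cycleComplement (2 * k) →g (⊤ : SimpleGraph (ZMod k)),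
      f 0 = a ∧ f 1 = b := by
  haveI : NeZero (2 * k) := ⟨by omega⟩
  haveI : Fact (1 < 2 * k) := ⟨by omega⟩
  have hv0 : (0 : ZMod (2 * k)).val = 0 := ZMod.val_zero
  have hv1 : (1 : ZMod (2 * k)).val = 1 := ZMod.val_one _
  by_cases hab : a = b
  · refine ⟨pairHom k 0 hk (by omega) (Equiv.swap 0 a), ?_, ?_⟩
    · show Equiv.swap 0 a ((((0 : ZMod (2*k)).val + 0) / 2 : ℕ) : ZMod k) = a
      rw [hv0]
      have h0 : (((0 + 0) / 2 : ℕ) : ZMod k) = 0 := by norm_num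
      rw [h0]
      exact Equiv.swap_apply_left 0 a
    · show Equiv.swap 0 a ((((1 : ZMod (2*k)).val + 0) / 2 : ℕ) : ZMod k) = b
      rw [hv1]
      rw [show ((1 + 0) / 2 : ℕ) = 0 from rfl, Nat.cast_zero, Equiv.swap_apply_left]
      exact hab
  · have hk2 : 2 ≤ k := by
      rcases Nat.lt_or_ge k 2 with h | h
      · exfalso
        have hk1 : k = 1 := by omega
        subst hk1
        exact hab (Subsingleton.elim a b)
      · exact h
    haveI : Fact (1 < k) := ⟨hk2⟩
    set τ : Equiv.Perm (ZMod k) := Equiv.swap 0 a with hτ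
    set c : ZMod k := τ 1 with hc
    set σ : Equiv.Perm (ZMod k) := τ.trans (Equiv.swap c b) with hσ
    have hca : a ≠ c := by
      intro h
      have h2 : τ 0 = τ 1 := by
        rw [← hc, ← h, hτ]
        exact Equiv.swap_apply_left 0 a
      exact one_ne_zero (τ.injective h2).symm
    refine ⟨pairHom k 1 hk le_rfl σ, ?_, ?_⟩
    · show σ ((((0 : ZMod (2*k)).val + 1) / 2 : ℕ) : ZMod k) = a
      rw [hv0]
      have h0 : (((0 + 1) / 2 : ℕ) : ZMod k) = 0 := by norm_num
      rw [h0, hσ, Equiv.trans_apply]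
      have hτ0 : τ 0 = a := Equiv.swap_apply_left 0 a
      rw [hτ0]
      exact Equiv.swap_apply_of_ne_of_ne hca hab
    · show σ ((((1 : ZMod (2*k)).val + 1) / 2 : ℕ) : ZMod k) = b
      rw [hv1]
      have h0 : (((1 + 1) / 2 : ℕ) : ZMod k) = 1 := by norm_num
      rw [h0, hσ, Equiv.trans_apply, ← hc]
      exact Equiv.swap_apply_left c b
end

section
/- Let n ≥ 1 and let C denote the cycle graph on ZMod (2n+1), i.e. a adjacent to a' iff a ≠ a' and a' = a+1 or a' = a−1. Let A be a unital C*-algebra and let p : ZMod (2n+1) → ZMod (2n+1) → A be a family of projections such that ∑_b p a b = 1 for every a, and p a b · p a' b' = 0 whenever a, a' are adjacent in C and b, b' are not adjacent in C. Then: (i) p a b · p a' b = 0 for all distinct a, a' and every b; (ii) ∑_a p a b = 1 for every b; (iii) p a b · p a' b' = 0 whenever a, a' are not adjacent in C and b, b' are adjacent in C. -/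
/-- Adjacency in the cycle graph on `ZMod m`: `a ~ a'` iff `a ≠ a'` and
`a' = a + 1` or `a' = a - 1`. -/
def cycleAdj (m : ℕ) (a a' : ZMod m) : Prop :=
  a ≠ a' ∧ (a' = a + 1 ∨ a' = a - 1)

/-!
The relations of `End⁺(G)` propagate along walks: if `a` and `a'` are joined by a walk of
length `k` while no walk of length `k` joins `b` to `b'`, then `p a b * p a' b' = 0`
(insert `1 = ∑ b₁, p a₁ b₁` after the first step `a ~ a₁` and induct). In the cycle on
`ZMod (2n+1)` a walk from `b` to `b + j` of length `k` with `k + |j| ≤ 2n` cannot wind around,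
so `k ≡ j (mod 2)`; on the other hand, going from `a` to `a'` once forwards and once
backwards gives two walks whose lengths add up to `2n + 1`, so one of them has odd length and
one even length. With `j = 0` this gives (i), with `j = ±1` it gives (iii). For (ii), by (i)
each column sum is a projection, hence `≤ 1`, and all column sums add up to `(2n+1) • 1`.
-/

open Finset SimpleGraph

namespace IsStarProjection

variable {A : Type*} [CStarAlgebra A]

/-- Compressing `∑ k, q k = 1` by `q j` gives `q j = q j + ∑_{k ≠ j} (q k q j)⋆ (q k q j)`,
so every `q k q j` with `k ≠ j` vanishes. -/
lemma mul_eq_zero_of_sum_eq_one_s6 {ι : Type*} [Fintype ι] {q : ι → A}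
    (hq : ∀ i, IsStarProjection (q i)) (hsum : ∑ i, q i = 1) {i j : ι} (hij : i ≠ j) :
    q i * q j = 0 := by
  classical
  let := CStarAlgebra.spectralOrder A
  let := CStarAlgebra.spectralOrderedRing A
  have hconj : ∀ k, q j * q k * q j = star (q k * q j) * (q k * q j) := fun k => by
    simp only [star_mul, (hq j).isSelfAdjoint.star_eq, (hq k).isSelfAdjoint.star_eq, mul_assoc]
    rw [← mul_assoc (q k) (q k), (hq k).isIdempotentElem.eq]
  have hrest : ∑ k ∈ univ.erase j, star (q k * q j) * (q k * q j) = 0 := by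
    have hdecomp : q j + ∑ k ∈ univ.erase j, star (q k * q j) * (q k * q j) = q j + 0 :=
      calc _ = ∑ k, q j * q k * q j := by
            rw [← add_sum_erase _ _ (mem_univ j), (hq j).isIdempotentElem.eq,
              (hq j).isIdempotentElem.eq]
            simp only [hconj]
        _ = q j * (∑ k, q k) * q j := by rw [mul_sum, sum_mul]
        _ = q j + 0 := by rw [hsum, mul_one, (hq j).isIdempotentElem.eq, add_zero]
    exact add_left_cancel hdecomp
  have hij' := (sum_eq_zero_iff_of_nonneg fun k _ => star_mul_self_nonneg (q k * q j)).1 hrest i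
    (mem_erase.2 ⟨hij, mem_univ i⟩)
  exact (CStarRing.star_mul_self_eq_zero_iff _).1 hij'

lemma sum_of_mul_eq_zero {ι : Type*} [DecidableEq ι] {q : ι → A} {s : Finset ι}
    (hq : ∀ i, IsStarProjection (q i)) (horth : ∀ i j, i ≠ j → q i * q j = 0) :
    IsStarProjection (∑ i ∈ s, q i) := by
  induction s using Finset.induction_on with
  | empty => simp [IsStarProjection.zero]
  | insert i s hi ih =>
    rw [sum_insert hi]
    refine (hq i).add ih ?_
    rw [mul_sum]
    exact sum_eq_zero fun j hj => horth i j (ne_of_mem_of_not_mem hj hi).symm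

lemma sum_column_eq_one {ι : Type*} [Fintype ι] {p : ι → ι → A}
    (hp : ∀ a b, IsStarProjection (p a b)) (hrow : ∀ a, ∑ b, p a b = 1)
    (hcol : ∀ a a' b, a ≠ a' → p a b * p a' b = 0) (b : ι) :
    ∑ a, p a b = 1 := by
  classical
  let := CStarAlgebra.spectralOrder A
  let := CStarAlgebra.spectralOrderedRing A
  have hnonneg : ∀ b, 0 ≤ 1 - ∑ a, p a b := fun b =>
    (sum_of_mul_eq_zero (fun a => hp a b) fun a a' h => hcol a a' b h).one_sub_nonneg
  have htotal : ∑ b, (1 - ∑ a, p a b) = 0 := by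
    rw [sum_sub_distrib, sum_comm, sum_congr rfl fun a _ => hrow a, sub_self]
  have hb := (sum_eq_zero_iff_of_nonneg fun b _ => hnonneg b).1 htotal b (mem_univ b)
  exact (sub_eq_zero.1 hb).symm

end IsStarProjection

section Walk

variable {R V W : Type*} [Ring R] [Fintype W] {G : SimpleGraph V} {H : SimpleGraph W}
  {p : V → W → R}

theorem mul_eq_zero_of_walk (horth : ∀ a b b', b ≠ b' → p a b * p a b' = 0)
    (hsum : ∀ a, ∑ b, p a b = 1)
    (hrel : ∀ a a' b b', G.Adj a a' → ¬ H.Adj b b' → p a b * p a' b' = 0)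
    {a a' : V} (w : G.Walk a a') {b b' : W} (hw : ∀ w' : H.Walk b b', w'.length ≠ w.length) :
    p a b * p a' b' = 0 := by
  induction w generalizing b with
  | nil =>
    refine horth _ b b' ?_
    rintro rfl
    exact hw Walk.nil rfl
  | @cons a a₁ a' hadj w ih =>
    calc p a b * p a' b' = p a b * (∑ b₁, p a₁ b₁) * p a' b' := by rw [hsum, mul_one]
      _ = ∑ b₁, p a b * p a₁ b₁ * p a' b' := by rw [mul_sum, sum_mul]
      _ = 0 := sum_eq_zero fun b₁ _ => by
        by_cases hb : H.Adj b b₁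
        · rw [mul_assoc, ih fun w' h => hw (Walk.cons hb w') (by simp [h]), mul_zero]
        · rw [hrel _ _ _ _ hadj hb, zero_mul]

end Walk

def zmodCycleGraph (m : ℕ) : SimpleGraph (ZMod m) where
  Adj := cycleAdj m
  symm := ⟨fun _ _ h =>
    ⟨h.1.symm, h.2.symm.imp (fun h' => by rw [h']; ring) (fun h' => by rw [h']; ring)⟩⟩
  loopless := ⟨fun _ h => h.1 rfl⟩

namespace zmodCycleGraph

variable {m : ℕ}

@[simp]
lemma adj_iff {a a' : ZMod m} : (zmodCycleGraph m).Adj a a' ↔ cycleAdj m a a' := Iff.rfl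

lemma adj_add_one (hm : m ≠ 1) (a : ZMod m) : (zmodCycleGraph m).Adj a (a + 1) := by
  have := ZMod.nontrivial_iff.2 hm
  exact ⟨fun h => one_ne_zero (left_eq_add.1 h), Or.inl rfl⟩

lemma exists_walk_add_natCast (hm : m ≠ 1) (a : ZMod m) (k : ℕ) :
    ∃ w : (zmodCycleGraph m).Walk a (a + k), w.length = k := by
  induction k generalizing a with
  | zero => exact ⟨Walk.nil.copy rfl (by simp), by simp⟩
  | succ k ih =>
    obtain ⟨w, hw⟩ := ih (a + 1)
    exact ⟨(Walk.cons (adj_add_one hm a) w).copy rfl (by push_cast; ring), by simp [hw]⟩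

lemma exists_walk_sub_natCast (hm : m ≠ 1) (a : ZMod m) (k : ℕ) :
    ∃ w : (zmodCycleGraph m).Walk a (a - k), w.length = k := by
  obtain ⟨w, hw⟩ := exists_walk_add_natCast hm (a - k) k
  exact ⟨w.reverse.copy (by ring) rfl, by simp [hw]⟩

lemma exists_walks_length_add_eq [NeZero m] (hm : m ≠ 1) (a a' : ZMod m) :
    ∃ w₁ w₂ : (zmodCycleGraph m).Walk a a', w₁.length + w₂.length = m := by
  have hd : (a' - a).val ≤ m := (ZMod.val_lt _).le
  obtain ⟨w₁, hw₁⟩ := exists_walk_add_natCast hm a (a' - a).val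
  obtain ⟨w₂, hw₂⟩ := exists_walk_sub_natCast hm a (m - (a' - a).val)
  have h₁ : a + ((a' - a).val : ZMod m) = a' := by rw [ZMod.natCast_zmod_val]; ring
  have h₂ : a - ((m - (a' - a).val : ℕ) : ZMod m) = a' := by
    rw [Nat.cast_sub hd, ZMod.natCast_self, ZMod.natCast_zmod_val]; ring
  exact ⟨w₁.copy rfl h₁, w₂.copy rfl h₂, by simp only [Walk.length_copy, hw₁, hw₂]; omega⟩

lemma exists_intCast_of_walk {a a' : ZMod m} (w : (zmodCycleGraph m).Walk a a') :
    ∃ i : ℤ, i.natAbs ≤ w.length ∧ i % 2 = w.length % 2 ∧ a' = a + i := by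
  induction w with
  | nil => exact ⟨0, by simp⟩
  | cons hadj w ih =>
    obtain ⟨i, hi, hpar, rfl⟩ := ih
    rw [Walk.length_cons]
    rcases (adj_iff.1 hadj).2 with rfl | rfl
    · exact ⟨i + 1, by omega, by push_cast; omega, by push_cast; ring⟩
    · exact ⟨i - 1, by omega, by push_cast; omega, by push_cast; ring⟩

lemma length_emod_two {b b' : ZMod m} (w : (zmodCycleGraph m).Walk b b') {j : ℤ}
    (hj : b' = b + j) (hlt : w.length + j.natAbs < m) :
    (w.length : ℤ) % 2 = j % 2 := by
  obtain ⟨i, hi, hpar, hi'⟩ := exists_intCast_of_walk w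
  have hdvd : (m : ℤ) ∣ i - j := by
    rw [← ZMod.intCast_zmod_eq_zero_iff_dvd, Int.cast_sub, sub_eq_zero]
    exact add_left_cancel (hi'.symm.trans hj)
  have hij := Int.eq_zero_of_abs_lt_dvd hdvd (abs_lt.2 ⟨by omega, by omega⟩)
  omega

lemma even_length_of_walk_self {b : ZMod m} (w : (zmodCycleGraph m).Walk b b)
    (hlt : w.length < m) : Even w.length := by
  have h := length_emod_two w (j := 0) (by simp) (by simpa using hlt)
  rw [Nat.even_iff]
  omega

lemma odd_length_of_adj {b b' : ZMod m} (hb : (zmodCycleGraph m).Adj b b')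
    (w : (zmodCycleGraph m).Walk b b') (hlt : w.length + 1 < m) : Odd w.length := by
  rw [Nat.odd_iff]
  rcases (adj_iff.1 hb).2 with rfl | rfl
  · have h := length_emod_two w (j := 1) (by simp) (by simpa using hlt)
    omega
  · have h := length_emod_two w (j := -1) (by simp [sub_eq_add_neg]) (by simpa using hlt)
    omega

variable {n : ℕ} {a a' : ZMod (2 * n + 1)}

lemma exists_walk_odd_length_le (hne : a ≠ a') :
    ∃ w : (zmodCycleGraph (2 * n + 1)).Walk a a', Odd w.length ∧ w.length ≤ 2 * n := by
  obtain ⟨w₁, w₂, hlen⟩ :=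
    exists_walks_length_add_eq (ZMod.nontrivial_iff.1 (nontrivial_of_ne a a' hne)) a a'
  have h₁ : w₁.length ≠ 0 := fun h => hne (Walk.eq_of_length_eq_zero h)
  have h₂ : w₂.length ≠ 0 := fun h => hne (Walk.eq_of_length_eq_zero h)
  simp only [Nat.odd_iff]
  rcases Nat.mod_two_eq_zero_or_one w₁.length with h | h
  · exact ⟨w₂, by omega, by omega⟩
  · exact ⟨w₁, h, by omega⟩

lemma exists_walk_even_length_lt (hne : a ≠ a')
    (hna : ¬ (zmodCycleGraph (2 * n + 1)).Adj a a') :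
    ∃ w : (zmodCycleGraph (2 * n + 1)).Walk a a', Even w.length ∧ w.length + 1 < 2 * n + 1 := by
  obtain ⟨w₁, w₂, hlen⟩ :=
    exists_walks_length_add_eq (ZMod.nontrivial_iff.1 (nontrivial_of_ne a a' hne)) a a'
  have h₁ : w₁.length ≠ 0 := fun h => hne (Walk.eq_of_length_eq_zero h)
  have h₂ : w₂.length ≠ 0 := fun h => hne (Walk.eq_of_length_eq_zero h)
  have h₁' : w₁.length ≠ 1 := fun h => hna (Walk.adj_of_length_eq_one h)
  have h₂' : w₂.length ≠ 1 := fun h => hna (Walk.adj_of_length_eq_one h)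
  simp only [Nat.even_iff]
  rcases Nat.mod_two_eq_zero_or_one w₁.length with h | h
  · exact ⟨w₁, h, by omega⟩
  · exact ⟨w₂, by omega, by omega⟩

end zmodCycleGraph

open zmodCycleGraph in
theorem stmt6_general {A : Type*} [CStarAlgebra A] (n : ℕ)
    (p : ZMod (2 * n + 1) → ZMod (2 * n + 1) → A)
    (hproj : ∀ a b, star (p a b) = p a b ∧ p a b * p a b = p a b)
    (hsum : ∀ a, ∑ b : ZMod (2 * n + 1), p a b = 1)
    (hrel : ∀ a a' b b', cycleAdj (2 * n + 1) a a' → ¬ cycleAdj (2 * n + 1) b b' →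
      p a b * p a' b' = 0) :
    (∀ a a' b, a ≠ a' → p a b * p a' b = 0) ∧
    (∀ b, ∑ a : ZMod (2 * n + 1), p a b = 1) ∧
    (∀ a a' b b', ¬ cycleAdj (2 * n + 1) a a' → cycleAdj (2 * n + 1) b b' →
      p a b * p a' b' = 0) := by
  have hp : ∀ a b, IsStarProjection (p a b) := fun a b => ⟨(hproj a b).2, (hproj a b).1⟩
  have hrow : ∀ a b b', b ≠ b' → p a b * p a b' = 0 := fun a _ _ h =>
    IsStarProjection.mul_eq_zero_of_sum_eq_one_s6 (hp a) (hsum a) h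
  have hcol : ∀ a a' b, a ≠ a' → p a b * p a' b = 0 := by
    intro a a' b hne
    obtain ⟨w, hodd, hle⟩ := exists_walk_odd_length_le hne
    refine mul_eq_zero_of_walk (H := zmodCycleGraph _) hrow hsum hrel w fun w' h => ?_
    exact Nat.not_even_iff_odd.2 hodd (h ▸ even_length_of_walk_self w' (by omega))
  refine ⟨hcol, IsStarProjection.sum_column_eq_one hp hsum hcol, ?_⟩
  intro a a' b b' hna hb
  obtain rfl | hne := eq_or_ne a a'
  · exact hrow a b b' hb.1
  obtain ⟨w, heven, hlt⟩ := exists_walk_even_length_lt hne hna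
  refine mul_eq_zero_of_walk (H := zmodCycleGraph _) hrow hsum hrel w fun w' h => ?_
  exact Nat.not_even_iff_odd.2 (h ▸ odd_length_of_adj hb w' (by omega)) heven

/-- Let `n ≥ 1` and let `p : ZMod (2n+1) → ZMod (2n+1) → A` be a
family of projections in a unital C*-algebra satisfying the relations of the
quantum endomorphism monoid `End⁺(C_{2n+1})` of the odd cycle.  Then the
additional relations of the quantum automorphism group `Aut⁺(C_{2n+1})` hold:
(i) distinct rows are columnwise orthogonal, (ii) columns sum to `1`,
(iii) `p a b * p a' b' = 0` whenever `a ≁ a'` but `b ~ b'`. -/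
theorem stmt6 {A : Type*} [CStarAlgebra A] (n : ℕ) (hn : 1 ≤ n)
    (p : ZMod (2 * n + 1) → ZMod (2 * n + 1) → A)
    (hproj : ∀ a b, star (p a b) = p a b ∧ p a b * p a b = p a b)
    (hsum : ∀ a, ∑ b : ZMod (2 * n + 1), p a b = 1)
    (hrel : ∀ a a' b b', cycleAdj (2 * n + 1) a a' → ¬ cycleAdj (2 * n + 1) b b' →
      p a b * p a' b' = 0) :
    (∀ a a' b, a ≠ a' → p a b * p a' b = 0) ∧
    (∀ b, ∑ a : ZMod (2 * n + 1), p a b = 1) ∧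
    (∀ a a' b b', ¬ cycleAdj (2 * n + 1) a a' → cycleAdj (2 * n + 1) b b' →
      p a b * p a' b' = 0) :=
  stmt6_general n p hproj hsum hrel
end

section
/- Let n ≥ 1 and let K denote the Kneser graph K(3n+2, n+1), whose vertices are the (n+1)-element subsets of a (3n+2)-element set, two vertices being adjacent iff they are disjoint. Let A be a unital C*-algebra and let p : V(K) → V(K) → A be a family of projections such that ∑_v p u v = 1 for every u, and p u v · p u' v' = 0 whenever u, u' are adjacent in K and v, v' are not adjacent in K. Then: (i) p u v · p u' v = 0 for all distinct u, u' and every v; (ii) ∑_u p u v = 1 for every v; (iii) p u v · p u' v' = 0 whenever u, u' are not adjacent in K and v, v' are adjacent in K. -/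
/-- The Kneser graph `K(n,k)`: vertices are the `k`-element subsets of an
`n`-element set, two (distinct) vertices being adjacent iff they are disjoint. -/
def kneserGraph (n k : ℕ) : SimpleGraph {s : Finset (Fin n) // s.card = k} where
  Adj u v := u ≠ v ∧ Disjoint u.1 v.1
  symm := ⟨fun _ _ h => ⟨h.1.symm, h.2.symm⟩⟩
  loopless := ⟨fun _ h => h.1 rfl⟩

section AuxiliaryLemmas


lemma aux_sum_star_mul_self_eq_zero {A : Type*} [CStarAlgebra A] {ι : Type*}
    (s : Finset ι) (x : ι → A) (h : ∑ i ∈ s, star (x i) * x i = 0) :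
    ∀ i ∈ s, x i = 0 := by
  let _ := CStarAlgebra.spectralOrder A
  have _ := CStarAlgebra.spectralOrderedRing A
  intro i hi
  have hnn : ∀ j ∈ s, (0:A) ≤ star (x j) * x j := fun j _ => star_mul_self_nonneg _
  have := (Finset.sum_eq_zero_iff_of_nonneg hnn).mp h i hi
  exact CStarRing.star_mul_self_eq_zero_iff (x i) |>.mp this

/-- Projections summing to `1` are pairwise orthogonal. -/
lemma aux_orth_of_sum_one {A : Type*} [CStarAlgebra A] {ι : Type*} [Fintype ι] [DecidableEq ι]
    (e : ι → A) (hp : ∀ i, star (e i) = e i ∧ e i * e i = e i)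
    (h1 : ∑ i, e i = 1) {i j : ι} (hij : i ≠ j) : e i * e j = 0 := by
  suffices key : ∀ k l : ι, k ≠ l → e l * e k = 0 by
    have h0 := key j i hij.symm
    have := congrArg star h0
    rwa [star_mul, (hp i).1, (hp j).1, star_zero] at this
  intro k l hkl
  have hsum0 : ∑ m ∈ Finset.univ.erase k, star (e m * e k) * (e m * e k) = 0 := by
    have expand : ∀ m : ι, star (e m * e k) * (e m * e k) = e k * e m * e k := by
      intro m
      rw [star_mul, (hp m).1, (hp k).1, mul_assoc, ← mul_assoc (e m), (hp m).2, ← mul_assoc]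
    rw [Finset.sum_congr rfl fun m _ => expand m]
    have hstep : ∑ m ∈ Finset.univ.erase k, e k * e m * e k
        = e k * (∑ m ∈ Finset.univ.erase k, e m) * e k := by
      rw [Finset.mul_sum, Finset.sum_mul]
    rw [hstep]
    have herase : ∑ m ∈ Finset.univ.erase k, e m = 1 - e k := by
      have h2 := Finset.sum_erase_add Finset.univ e (Finset.mem_univ k)
      rw [h1] at h2
      exact eq_sub_of_add_eq h2
    rw [herase, mul_sub, mul_one, (hp k).2, sub_mul, (hp k).2, sub_self]
  have := aux_sum_star_mul_self_eq_zero _ _ hsum0 l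
    (Finset.mem_erase.mpr ⟨hkl.symm, Finset.mem_univ l⟩)
  exact this

section Comb

variable {n : ℕ}

abbrev KV (n : ℕ) := {s : Finset (Fin (3 * n + 2)) // s.card = n + 1}

lemma kneser_adj_of_disjoint {u v : KV n} (h : Disjoint u.1 v.1) :
    (kneserGraph (3 * n + 2) (n + 1)).Adj u v := by
  refine ⟨fun he => ?_, h⟩
  subst he
  rw [disjoint_self] at h
  have := u.2
  rw [h] at this
  simp at this

lemma kneser_card_bound (s : Finset (Fin (3 * n + 2))) : s.card ≤ 3 * n + 2 := by
  simpa using Finset.card_le_univ s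

lemma kneser_no_triangle {a b c : KV n}
    (hab : (kneserGraph (3 * n + 2) (n + 1)).Adj a b)
    (hac : (kneserGraph (3 * n + 2) (n + 1)).Adj a c)
    (hbc : (kneserGraph (3 * n + 2) (n + 1)).Adj b c) : False := by
  have h1 : Disjoint (a.1 ∪ b.1) c.1 := Finset.disjoint_union_left.mpr ⟨hac.2, hbc.2⟩
  have h2 : (a.1 ∪ b.1 ∪ c.1).card = 3 * n + 3 := by
    rw [Finset.card_union_of_disjoint h1, Finset.card_union_of_disjoint hab.2, a.2, b.2, c.2]
    ring
  have := kneser_card_bound (a.1 ∪ b.1 ∪ c.1)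
  omega

lemma kneser_common_neighbor {u u' : KV n}
    (h : ¬ (kneserGraph (3 * n + 2) (n + 1)).Adj u u') (hne : u ≠ u') :
    ∃ w, (kneserGraph (3 * n + 2) (n + 1)).Adj u w ∧
         (kneserGraph (3 * n + 2) (n + 1)).Adj u' w := by
  have hnd : ¬ Disjoint u.1 u'.1 := fun hd => h ⟨hne, hd⟩
  have hint : 1 ≤ (u.1 ∩ u'.1).card := by
    rw [Nat.one_le_iff_ne_zero, Ne, Finset.card_eq_zero, ← Finset.disjoint_iff_inter_eq_empty]
    exact hnd
  have hcu : (u.1 ∪ u'.1).card + (u.1 ∩ u'.1).card = (n + 1) + (n + 1) := by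
    rw [Finset.card_union_add_card_inter, u.2, u'.2]
  have hcompl : n + 1 ≤ ((u.1 ∪ u'.1)ᶜ).card := by
    rw [Finset.card_compl]
    have := kneser_card_bound (u.1 ∪ u'.1)
    simp only [Fintype.card_fin]
    omega
  obtain ⟨t, hts, htc⟩ := Finset.exists_subset_card_eq hcompl
  have hdisj : Disjoint t (u.1 ∪ u'.1) := by
    refine Finset.disjoint_left.mpr fun a hat hau => ?_
    exact (Finset.mem_compl.mp (hts hat)) hau
  rw [Finset.disjoint_union_right] at hdisj
  exact ⟨⟨t, htc⟩, kneser_adj_of_disjoint hdisj.1.symm, kneser_adj_of_disjoint hdisj.2.symm⟩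

lemma kneser_adj_pair {u u' : KV n}
    (h : ¬ (kneserGraph (3 * n + 2) (n + 1)).Adj u u') (hne : u ≠ u') :
    ∃ w w', (kneserGraph (3 * n + 2) (n + 1)).Adj u w ∧
            (kneserGraph (3 * n + 2) (n + 1)).Adj u' w' ∧
            (kneserGraph (3 * n + 2) (n + 1)).Adj w w' := by
  -- pick x ∈ u \ u'
  have hsd : (u.1 \ u'.1).Nonempty := by
    rw [Finset.sdiff_nonempty]
    intro hsub
    exact hne (Subtype.ext (Finset.eq_of_subset_of_card_le hsub (by rw [u.2, u'.2])))
  obtain ⟨x, hx⟩ := hsd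
  have hxu : x ∈ u.1 := (Finset.mem_sdiff.mp hx).1
  have hxu' : x ∉ u'.1 := (Finset.mem_sdiff.mp hx).2
  -- pick Y ⊆ (insert x u'.1)ᶜ with card n
  have hBcard : (insert x u'.1).card = n + 2 := by
    rw [Finset.card_insert_of_notMem hxu', u'.2]
  have hY : n ≤ ((insert x u'.1)ᶜ).card := by
    rw [Finset.card_compl, hBcard]
    simp only [Fintype.card_fin]; omega
  obtain ⟨Y, hYs, hYc⟩ := Finset.exists_subset_card_eq hY
  have hxY : x ∉ Y := fun hmem => (Finset.mem_compl.mp (hYs hmem)) (Finset.mem_insert_self x _)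
  set w' : Finset (Fin (3 * n + 2)) := insert x Y with hw'def
  have hw'c : w'.card = n + 1 := by rw [hw'def, Finset.card_insert_of_notMem hxY, hYc]
  have hw'u' : Disjoint w' u'.1 := by
    rw [hw'def, Finset.disjoint_left]
    intro a ha hau'
    rcases Finset.mem_insert.mp ha with rfl | haY
    · exact hxu' hau'
    · exact (Finset.mem_compl.mp (hYs haY)) (Finset.mem_insert_of_mem hau')
  -- pick w ⊆ (u.1 ∪ w')ᶜ
  have hxint : x ∈ u.1 ∩ w' := Finset.mem_inter.mpr ⟨hxu, Finset.mem_insert_self x _⟩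
  have hintc : 1 ≤ (u.1 ∩ w').card := Finset.card_pos.mpr ⟨x, hxint⟩
  have huw'card : (u.1 ∪ w').card + (u.1 ∩ w').card = (n + 1) + (n + 1) := by
    rw [Finset.card_union_add_card_inter, u.2, hw'c]
  have hWc : n + 1 ≤ ((u.1 ∪ w')ᶜ).card := by
    rw [Finset.card_compl]
    have := kneser_card_bound (u.1 ∪ w')
    simp only [Fintype.card_fin]; omega
  obtain ⟨t, hts, htc⟩ := Finset.exists_subset_card_eq hWc
  have hdisj : Disjoint t (u.1 ∪ w') := by
    refine Finset.disjoint_left.mpr fun a hat hau => ?_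
    exact (Finset.mem_compl.mp (hts hat)) hau
  rw [Finset.disjoint_union_right] at hdisj
  exact ⟨⟨t, htc⟩, ⟨w', hw'c⟩, kneser_adj_of_disjoint hdisj.1.symm,
    kneser_adj_of_disjoint hw'u'.symm, kneser_adj_of_disjoint hdisj.2⟩

end Comb

end AuxiliaryLemmas

/-- Let `n ≥ 1` and let `K = K(3n+2, n+1)`.  If
`p : V(K) → V(K) → A` is a family of projections in a unital C*-algebra
satisfying the relations of `End⁺(K)`, then the additional relations of
`Aut⁺(K)` hold: (i) distinct rows are columnwise orthogonal, (ii) columns sum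
to `1`, (iii) `p u v * p u' v' = 0` whenever `u ≁ u'` but `v ~ v'`. -/
theorem stmt8 {A : Type*} [CStarAlgebra A] (n : ℕ) (hn : 1 ≤ n)
    (p : {s : Finset (Fin (3 * n + 2)) // s.card = n + 1} →
         {s : Finset (Fin (3 * n + 2)) // s.card = n + 1} → A)
    (hproj : ∀ u v, star (p u v) = p u v ∧ p u v * p u v = p u v)
    (hsum : ∀ u, ∑ v, p u v = 1)
    (hrel : ∀ u u' v v', (kneserGraph (3 * n + 2) (n + 1)).Adj u u' →
      ¬ (kneserGraph (3 * n + 2) (n + 1)).Adj v v' → p u v * p u' v' = 0) :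
    (∀ u u' v, u ≠ u' → p u v * p u' v = 0) ∧
    (∀ v, ∑ u, p u v = 1) ∧
    (∀ u u' v v', ¬ (kneserGraph (3 * n + 2) (n + 1)).Adj u u' →
      (kneserGraph (3 * n + 2) (n + 1)).Adj v v' → p u v * p u' v' = 0) := by
  classical
  set G := kneserGraph (3 * n + 2) (n + 1) with hG
  have hstar : ∀ u v, star (p u v) = p u v := fun u v => (hproj u v).1
  have rowOrth : ∀ u {v v'}, v ≠ v' → p u v * p u v' = 0 :=
    fun u {v v'} h => aux_orth_of_sum_one (p u) (hproj u) (hsum u) h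
  -- the "neighborhood sum" projections
  set Nb : KV n → Finset (KV n) := fun v => Finset.univ.filter (fun z => G.Adj v z) with hNb
  have absorbR : ∀ u w v, G.Adj u w → p u v * (∑ z ∈ Nb v, p w z) = p u v := by
    intro u w v huw
    have hsplit := Finset.sum_filter_add_sum_filter_not Finset.univ
      (fun z => G.Adj v z) (fun z => p u v * p w z)
    have hz : ∑ z ∈ Finset.univ.filter (fun z => ¬ G.Adj v z), p u v * p w z = 0 :=
      Finset.sum_eq_zero fun z hz => hrel u w v z huw (Finset.mem_filter.mp hz).2
    rw [hz, add_zero] at hsplit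
    rw [Finset.mul_sum, hNb, hsplit, ← Finset.mul_sum, hsum w, mul_one]
  have absorbL : ∀ u w v, G.Adj u w → (∑ z ∈ Nb v, p w z) * p u v = p u v := by
    intro u w v huw
    have h0 := congrArg star (absorbR u w v huw)
    rwa [star_mul, star_sum, Finset.sum_congr rfl (fun z _ => hstar w z), hstar u v] at h0
  -- part (i)
  have part1 : ∀ u u' v, u ≠ u' → p u v * p u' v = 0 := by
    intro u u' v hne
    by_cases hadj : G.Adj u u'
    · exact hrel u u' v v hadj (G.loopless.irrefl v)
    · obtain ⟨w, w', hw, hw', hww⟩ := kneser_adj_pair hadj hne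
      have hSS : (∑ z ∈ Nb v, p w z) * (∑ z' ∈ Nb v, p w' z') = 0 := by
        rw [Finset.sum_mul_sum]
        refine Finset.sum_eq_zero fun z hz => Finset.sum_eq_zero fun z' hz' => ?_
        have h1 : G.Adj v z := (Finset.mem_filter.mp hz).2
        have h2 : G.Adj v z' := (Finset.mem_filter.mp hz').2
        exact hrel w w' z z' hww (fun hzz => kneser_no_triangle h1 h2 hzz)
      calc p u v * p u' v
          = (p u v * (∑ z ∈ Nb v, p w z)) * ((∑ z' ∈ Nb v, p w' z') * p u' v) := by
            rw [absorbR u w v hw, absorbL u' w' v hw']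
        _ = p u v * (((∑ z ∈ Nb v, p w z) * (∑ z' ∈ Nb v, p w' z')) * p u' v) := by
            rw [mul_assoc, mul_assoc]
        _ = 0 := by rw [hSS, zero_mul, mul_zero]
  refine ⟨part1, ?_, ?_⟩
  · -- part (ii)
    intro v₀
    set q : KV n → A := fun v => ∑ u, p u v with hq
    have hq_idem : ∀ v, q v * q v = q v := by
      intro v
      rw [hq]
      simp only
      rw [Finset.sum_mul]
      refine Finset.sum_congr rfl fun u _ => ?_
      rw [Finset.mul_sum]
      rw [Finset.sum_eq_single u (fun u' _ hne => part1 u u' v (fun h => hne h.symm))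
        (fun h => absurd (Finset.mem_univ u) h)]
      exact (hproj u v).2
    have hq_star : ∀ v, star (q v) = q v := by
      intro v
      rw [hq]
      simp only [star_sum]
      exact Finset.sum_congr rfl fun u _ => hstar u v
    have hsum0 : ∑ v, star (1 - q v) * (1 - q v) = 0 := by
      have heach : ∀ v, star (1 - q v) * (1 - q v) = 1 - q v := by
        intro v
        rw [star_sub, star_one, hq_star, mul_sub, sub_mul, sub_mul, mul_one, one_mul,
          hq_idem, sub_self, sub_zero, mul_one]
      rw [Finset.sum_congr rfl fun v _ => heach v, Finset.sum_sub_distrib, Finset.sum_const]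
      have hcomm : ∑ v : KV n, q v = ∑ u : KV n, ∑ v, p u v := Finset.sum_comm
      rw [hcomm, Finset.sum_congr rfl fun u _ => hsum u, Finset.sum_const, sub_self]
    have := aux_sum_star_mul_self_eq_zero Finset.univ (fun v => 1 - q v) hsum0 v₀
      (Finset.mem_univ v₀)
    exact (sub_eq_zero.mp this).symm
  · -- part (iii)
    intro u u' v v' hnadj hvv'
    by_cases hne : u = u'
    · subst hne
      exact rowOrth u hvv'.1
    · obtain ⟨w, hw, hw'⟩ := kneser_common_neighbor hnadj hne
      have hSS : (∑ z ∈ Nb v, p w z) * (∑ z' ∈ Nb v', p w z') = 0 := by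
        rw [Finset.sum_mul_sum]
        refine Finset.sum_eq_zero fun z hz => Finset.sum_eq_zero fun z' hz' => ?_
        have h1 : G.Adj v z := (Finset.mem_filter.mp hz).2
        have h2 : G.Adj v' z' := (Finset.mem_filter.mp hz').2
        refine rowOrth w fun hzz => ?_
        subst hzz
        exact kneser_no_triangle hvv' h1 h2
      calc p u v * p u' v'
          = (p u v * (∑ z ∈ Nb v, p w z)) * ((∑ z' ∈ Nb v', p w z') * p u' v') := by
            rw [absorbR u w v hw, absorbL u' w v' hw']
        _ = p u v * (((∑ z ∈ Nb v, p w z) * (∑ z' ∈ Nb v', p w z')) * p u' v') := by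
            rw [mul_assoc, mul_assoc]
        _ = 0 := by rw [hSS, zero_mul, mul_zero]
end

section
/- Let n ≥ 2. In the Kneser graph K(2n−1, n−1), any two distinct vertices u and v are joined by a path of odd length strictly less than 2n−1. -/
/-- Build a walk from a function `f : ℕ → V` whose consecutive values are adjacent. -/
lemma walk_of_fn {V : Type*} (G : SimpleGraph V) :
    ∀ (m : ℕ) (f : ℕ → V), (∀ j < m, G.Adj (f j) (f (j+1))) →
    ∃ w : G.Walk (f 0) (f m), w.length = m ∧ w.support = (List.range (m+1)).map f := by
  intro m
  induction m with
  | zero => exact fun f _ => ⟨.nil, rfl, rfl⟩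
  | succ m ih =>
    intro f h
    obtain ⟨w, hl, hs⟩ := ih (fun j => f (j+1)) (fun j hj => h (j+1) (by omega))
    refine ⟨.cons (h 0 (by omega)) w, by simp [hl], ?_⟩
    rw [SimpleGraph.Walk.support_cons, hs]
    rw [List.range_succ_eq_map (n := m+1), List.range_succ_eq_map (n := m)]
    simp [Function.comp, Nat.succ_eq_add_one]

lemma disj3 {α : Type*} [DecidableEq α] {a b c d e f : Finset α}
    (h1 : Disjoint a d) (h2 : Disjoint a e) (h3 : Disjoint a f)
    (h4 : Disjoint b d) (h5 : Disjoint b e) (h6 : Disjoint b f)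
    (h7 : Disjoint c d) (h8 : Disjoint c e) (h9 : Disjoint c f) :
    Disjoint (a ∪ b ∪ c) (d ∪ e ∪ f) := by
  simp only [Finset.disjoint_union_left, Finset.disjoint_union_right,
    h1, h2, h3, h4, h5, h6, h7, h8, h9, and_self]

/-- For `n ≥ 2`, any two distinct vertices of the Kneser graph
`K(2n-1, n-1)` are joined by a path of odd length strictly less than `2n-1`. -/
theorem stmt9 (n : ℕ) (hn : 2 ≤ n)
    (u v : {s : Finset (Fin (2 * n - 1)) // s.card = n - 1}) (huv : u ≠ v) :
    ∃ w : (kneserGraph (2 * n - 1) (n - 1)).Walk u v,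
      w.IsPath ∧ Odd w.length ∧ w.length < 2 * n - 1 := by
  classical
  set A : Finset (Fin (2*n-1)) := u.1 \ v.1 with hA
  set B : Finset (Fin (2*n-1)) := v.1 \ u.1 with hB
  set C : Finset (Fin (2*n-1)) := u.1 ∩ v.1 with hC
  set D : Finset (Fin (2*n-1)) := (u.1 ∪ v.1)ᶜ with hD
  set i : ℕ := C.card with hi
  -- basic cardinalities
  have hcu : u.1.card = n - 1 := u.2
  have hcv : v.1.card = n - 1 := v.2
  have hile : i ≤ n - 1 := hcu ▸ Finset.card_le_card (Finset.inter_subset_left)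
  have hilt : i < n - 1 := by
    rcases lt_or_eq_of_le hile with h | h
    · exact h
    · exfalso
      have h1 : C = u.1 := Finset.eq_of_subset_of_card_le Finset.inter_subset_left (by omega)
      have h2 : C = v.1 := Finset.eq_of_subset_of_card_le Finset.inter_subset_right (by omega)
      exact huv (Subtype.ext (h1 ▸ h2))
  have hcA : A.card = n - 1 - i := by
    have := Finset.card_sdiff_add_card_inter u.1 v.1
    rw [hcu, ← hA, ← hC, ← hi] at this; omega
  have hcB : B.card = n - 1 - i := by
    have := Finset.card_sdiff_add_card_inter v.1 u.1
    rw [hcv, ← hB] at this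
    rw [Finset.inter_comm, ← hC, ← hi] at this; omega
  have hcD : D.card = i + 1 := by
    have h1 := Finset.card_union_add_card_inter u.1 v.1
    rw [hcu, hcv, ← hC, ← hi] at h1
    have h2 : D.card = Fintype.card (Fin (2*n-1)) - (u.1 ∪ v.1).card := Finset.card_compl _
    rw [Fintype.card_fin] at h2
    omega
  -- disjointness of the four blocks
  have dAB : Disjoint A B := by
    rw [hA, hB, Finset.disjoint_left]; intro a ha hb
    exact (Finset.mem_sdiff.mp hb).2 (Finset.mem_sdiff.mp ha).1
  have dAC : Disjoint A C := by
    rw [hA, hC, Finset.disjoint_left]; intro a ha hb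
    exact (Finset.mem_sdiff.mp ha).2 (Finset.mem_inter.mp hb).2
  have dBC : Disjoint B C := by
    rw [hB, hC, Finset.disjoint_left]; intro a ha hb
    exact (Finset.mem_sdiff.mp ha).2 (Finset.mem_inter.mp hb).1
  have dDu : Disjoint D u.1 := by
    rw [hD, Finset.disjoint_left]; intro a ha hb
    exact (Finset.mem_compl.mp ha) (Finset.mem_union_left _ hb)
  have dDv : Disjoint D v.1 := by
    rw [hD, Finset.disjoint_left]; intro a ha hb
    exact (Finset.mem_compl.mp ha) (Finset.mem_union_right _ hb)
  have hAu : A ⊆ u.1 := Finset.sdiff_subset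
  have hBv : B ⊆ v.1 := Finset.sdiff_subset
  have hCu : C ⊆ u.1 := Finset.inter_subset_left
  have hCv : C ⊆ v.1 := Finset.inter_subset_right
  have dAD : Disjoint A D := (dDu.symm.mono_left hAu)
  have dBD : Disjoint B D := (dDv.symm.mono_left hBv)
  have dCD : Disjoint C D := (dDu.symm.mono_left hCu)
  -- sorted lists
  set lc : List (Fin (2*n-1)) := C.sort (· ≤ ·) with hlc
  set ld : List (Fin (2*n-1)) := D.sort (· ≤ ·) with hld
  have lcnd : lc.Nodup := Finset.sort_nodup _ _
  have ldnd : ld.Nodup := Finset.sort_nodup _ _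
  have lclen : lc.length = i := Finset.length_sort _
  have ldlen : ld.length = i + 1 := by rw [hld, Finset.length_sort, hcD]
  have lcfin : lc.toFinset = C := Finset.sort_toFinset _ _
  have ldfin : ld.toFinset = D := Finset.sort_toFinset _ _
  -- the path as a function into finsets
  set F : ℕ → Finset (Fin (2*n-1)) := fun m =>
    if m % 2 = 0 then A ∪ (lc.drop (m/2)).toFinset ∪ (ld.drop (i+1 - m/2)).toFinset
    else B ∪ (lc.take (m/2)).toFinset ∪ (ld.take (i - m/2)).toFinset with hF
  -- subset facts for take/drop pieces
  have tcC : ∀ a, (lc.take a).toFinset ⊆ C := fun a x hx => by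
    rw [← lcfin, List.mem_toFinset]
    exact (List.take_sublist _ _).subset (List.mem_toFinset.mp hx)
  have dcC : ∀ a, (lc.drop a).toFinset ⊆ C := fun a x hx => by
    rw [← lcfin, List.mem_toFinset]
    exact (List.drop_sublist _ _).subset (List.mem_toFinset.mp hx)
  have tdD : ∀ a, (ld.take a).toFinset ⊆ D := fun a x hx => by
    rw [← ldfin, List.mem_toFinset]
    exact (List.take_sublist _ _).subset (List.mem_toFinset.mp hx)
  have ddD : ∀ a, (ld.drop a).toFinset ⊆ D := fun a x hx => by
    rw [← ldfin, List.mem_toFinset]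
    exact (List.drop_sublist _ _).subset (List.mem_toFinset.mp hx)
  have dtd_lc : ∀ a b, a ≤ b → Disjoint (lc.take a).toFinset (lc.drop b).toFinset := fun a b h =>
    List.disjoint_toFinset_iff_disjoint.mpr (List.disjoint_take_drop lcnd h)
  have dtd_ld : ∀ a b, a ≤ b → Disjoint (ld.take a).toFinset (ld.drop b).toFinset := fun a b h =>
    List.disjoint_toFinset_iff_disjoint.mpr (List.disjoint_take_drop ldnd h)
  -- cards of the pieces
  have ctc : ∀ a, a ≤ i → (lc.take a).toFinset.card = a := fun a ha => by
    rw [List.toFinset_card_of_nodup (lcnd.sublist (List.take_sublist _ _)),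
      List.length_take, lclen]; omega
  have cdc : ∀ a, (lc.drop a).toFinset.card = i - a := fun a => by
    rw [List.toFinset_card_of_nodup (lcnd.sublist (List.drop_sublist _ _)),
      List.length_drop, lclen]
  have ctd : ∀ a, a ≤ i + 1 → (ld.take a).toFinset.card = a := fun a ha => by
    rw [List.toFinset_card_of_nodup (ldnd.sublist (List.take_sublist _ _)),
      List.length_take, ldlen]; omega
  have cdd : ∀ a, (ld.drop a).toFinset.card = i + 1 - a := fun a => by
    rw [List.toFinset_card_of_nodup (ldnd.sublist (List.drop_sublist _ _)),
      List.length_drop, ldlen]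
  -- cardinality of F m for m ≤ 2*i+1
  have cardF : ∀ m, m ≤ 2*i+1 → (F m).card = n - 1 := by
    intro m hm
    rw [hF]
    by_cases hpar : m % 2 = 0
    · simp only [hpar, if_pos]
      have h1 : Disjoint A (lc.drop (m/2)).toFinset := dAC.mono_right (dcC _)
      have h2 : Disjoint (A ∪ (lc.drop (m/2)).toFinset) (ld.drop (i+1 - m/2)).toFinset := by
        refine Finset.disjoint_union_left.mpr ⟨dAD.mono_right (ddD _), dCD.mono (dcC _) (ddD _)⟩
      rw [Finset.card_union_of_disjoint h2, Finset.card_union_of_disjoint h1, hcA, cdc, cdd]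
      omega
    · simp only [hpar, if_neg, if_false]
      have h1 : Disjoint B (lc.take (m/2)).toFinset := dBC.mono_right (tcC _)
      have h2 : Disjoint (B ∪ (lc.take (m/2)).toFinset) (ld.take (i - m/2)).toFinset := by
        refine Finset.disjoint_union_left.mpr ⟨dBD.mono_right (tdD _), dCD.mono (tcC _) (tdD _)⟩
      rw [Finset.card_union_of_disjoint h2, Finset.card_union_of_disjoint h1, hcB,
        ctc _ (by omega), ctd _ (by omega)]
      omega
  -- consecutive disjointness
  have dadj : ∀ m, m + 1 ≤ 2*i+1 → Disjoint (F m) (F (m+1)) := by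
    intro m hm
    by_cases hpar : m % 2 = 0
    · have hp1 : (m+1) % 2 = 1 := by omega
      have hq : (m+1)/2 = m/2 := by omega
      rw [hF]
      simp only [hpar, if_pos, hp1, Nat.one_ne_zero, if_neg, if_false, hq]
      exact disj3 dAB (dAC.mono_right (tcC _)) (dAD.mono_right (tdD _))
        (dBC.symm.mono_left (dcC _)) (dtd_lc _ _ le_rfl).symm (dCD.mono (dcC _) (tdD _))
        (dBD.symm.mono_left (ddD _)) (dCD.symm.mono (ddD _) (tcC _)) (dtd_ld _ _ (by omega)).symm
    · have hp1 : (m+1) % 2 = 0 := by omega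
      have hq : (m+1)/2 = m/2 + 1 := by omega
      rw [hF]
      simp only [hpar, if_neg, if_false, hp1, if_pos, hq]
      exact disj3 dAB.symm (dBC.mono_right (dcC _)) (dBD.mono_right (ddD _))
        (dAC.symm.mono_left (tcC _)) (dtd_lc _ _ (by omega)) (dCD.mono (tcC _) (ddD _))
        (dAD.symm.mono_left (tdD _)) (dCD.symm.mono (tdD _) (dcC _)) (dtd_ld _ _ (by omega))
  -- A is nonempty and contained in each even F, disjoint from each odd F
  have hAne : A.Nonempty := Finset.card_pos.mp (by omega)
  have hAsub : ∀ m, m % 2 = 0 → A ⊆ F m := by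
    intro m hm; rw [hF]; simp only [hm, if_pos]
    exact (Finset.subset_union_left).trans Finset.subset_union_left
  have hAdisj : ∀ m, m % 2 = 1 → Disjoint A (F m) := by
    intro m hm; rw [hF]; simp only [hm, Nat.one_ne_zero, if_neg, if_false]
    simp only [Finset.disjoint_union_right]
    exact ⟨⟨dAB, dAC.mono_right (tcC _)⟩, dAD.mono_right (tdD _)⟩
  -- intersection with D resp. C determines the index
  have hinterD : ∀ m, m % 2 = 0 → F m ∩ D = (ld.drop (i+1 - m/2)).toFinset := by
    intro m hm; rw [hF]; simp only [hm, if_pos]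
    rw [Finset.union_inter_distrib_right, Finset.union_inter_distrib_right,
      Finset.disjoint_iff_inter_eq_empty.mp dAD,
      Finset.disjoint_iff_inter_eq_empty.mp (dCD.mono_left (dcC _)),
      Finset.inter_eq_left.mpr (ddD _)]
    simp
  have hinterC : ∀ m, m % 2 = 1 → F m ∩ C = (lc.take (m/2)).toFinset := by
    intro m hm; rw [hF]; simp only [hm, Nat.one_ne_zero, if_neg, if_false]
    rw [Finset.union_inter_distrib_right, Finset.union_inter_distrib_right,
      Finset.disjoint_iff_inter_eq_empty.mp dBC,
      Finset.inter_eq_left.mpr (tcC _),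
      Finset.disjoint_iff_inter_eq_empty.mp (dCD.symm.mono_left (tdD _))]
    simp
  -- injectivity of F on [0, 2i+1]
  have Finj : ∀ a ≤ 2*i+1, ∀ b ≤ 2*i+1, F a = F b → a = b := by
    intro a ha b hb hab
    rcases Nat.even_or_odd a with hea | hoa <;> rcases Nat.even_or_odd b with heb | hob
    · -- both even
      have ha2 : a % 2 = 0 := Nat.even_iff.mp hea
      have hb2 : b % 2 = 0 := Nat.even_iff.mp heb
      have := congrArg (fun s => (s ∩ D).card) hab
      simp only [hinterD a ha2, hinterD b hb2, cdd] at this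
      omega
    · -- a even, b odd : contradiction via A
      have ha2 : a % 2 = 0 := Nat.even_iff.mp hea
      have hb2 : b % 2 = 1 := Nat.odd_iff.mp hob
      obtain ⟨x, hx⟩ := hAne
      have h1 : x ∈ F a := hAsub a ha2 hx
      have h2 : x ∉ F b := Finset.disjoint_left.mp (hAdisj b hb2) hx
      exact absurd (hab ▸ h1) h2
    · have ha2 : a % 2 = 1 := Nat.odd_iff.mp hoa
      have hb2 : b % 2 = 0 := Nat.even_iff.mp heb
      obtain ⟨x, hx⟩ := hAne
      have h1 : x ∈ F b := hAsub b hb2 hx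
      have h2 : x ∉ F a := Finset.disjoint_left.mp (hAdisj a ha2) hx
      exact absurd (hab ▸ h1) h2
    · -- both odd
      have ha2 : a % 2 = 1 := Nat.odd_iff.mp hoa
      have hb2 : b % 2 = 1 := Nat.odd_iff.mp hob
      have := congrArg (fun s => (s ∩ C).card) hab
      simp only [hinterC a ha2, hinterC b hb2] at this
      rw [ctc _ (by omega), ctc _ (by omega)] at this
      omega
  -- endpoints
  have hF0 : F 0 = u.1 := by
    rw [hF]
    simp only [Nat.zero_mod, if_pos, Nat.zero_div, Nat.sub_zero, List.drop_zero]
    rw [List.drop_eq_nil_of_le (by omega), lcfin]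
    simp [hA, hC, Finset.sdiff_union_inter]
  have hFlast : F (2*i+1) = v.1 := by
    rw [hF]
    have h1 : (2*i+1) % 2 = 1 := by omega
    have h2 : (2*i+1) / 2 = i := by omega
    simp only [h1, Nat.one_ne_zero, if_neg, if_false, h2, Nat.sub_self, List.take_zero]
    rw [List.take_of_length_le (by omega), lcfin]
    simp only [List.toFinset_nil, Finset.union_empty]
    rw [hB, hC, Finset.inter_comm, Finset.sdiff_union_inter]
  -- package into the subtype
  set g : ℕ → {s : Finset (Fin (2*n-1)) // s.card = n - 1} := fun m =>
    if h : (F m).card = n - 1 then ⟨F m, h⟩ else u with hg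
  have hgval : ∀ m, m ≤ 2*i+1 → (g m).1 = F m := by
    intro m hm; rw [hg]; simp only [cardF m hm, dif_pos]
  have hg0 : g 0 = u := Subtype.ext (by rw [hgval 0 (by omega), hF0])
  have hglast : g (2*i+1) = v := Subtype.ext (by rw [hgval _ le_rfl, hFlast])
  have hadj : ∀ j < 2*i+1, (kneserGraph (2*n-1) (n-1)).Adj (g j) (g (j+1)) := by
    intro j hj
    have hd : Disjoint (g j).1 (g (j+1)).1 := by
      rw [hgval j (by omega), hgval (j+1) (by omega)]
      exact dadj j (by omega)
    refine ⟨?_, hd⟩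
    intro heq
    -- then F j = F (j+1), contradicting injectivity
    have : F j = F (j+1) := by
      rw [← hgval j (by omega), ← hgval (j+1) (by omega), heq]
    have := Finj j (by omega) (j+1) (by omega) this
    omega
  obtain ⟨w, hwl, hws⟩ := walk_of_fn (kneserGraph (2*n-1) (n-1)) (2*i+1) g hadj
  refine ⟨w.copy hg0 hglast, ?_, ?_, ?_⟩
  · rw [SimpleGraph.Walk.isPath_def, SimpleGraph.Walk.support_copy, hws]
    refine List.Nodup.map_on ?_ List.nodup_range
    intro a ha b hb hab
    rw [List.mem_range] at ha hb
    have hfa : F a = F b := by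
      rw [← hgval a (by omega), ← hgval b (by omega), hab]
    exact Finj a (by omega) b (by omega) hfa
  · rw [SimpleGraph.Walk.length_copy, hwl]
    exact ⟨i, by omega⟩
  · rw [SimpleGraph.Walk.length_copy, hwl]
    omega
end

section
/- Let n ≥ 2. In the Kneser graph K(2n−1, n−1), any two non-adjacent vertices u and v (possibly equal) are joined by a walk of even length strictly less than 2n−2. -/
lemma kneser_aux (n : ℕ) (hn : 2 ≤ n) :
    ∀ k (u v : {s : Finset (Fin (2 * n - 1)) // s.card = n - 1}),
      (u.1 ∩ v.1).Nonempty → n - 1 - (u.1 ∩ v.1).card = k →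
      ∃ w : (kneserGraph (2 * n - 1) (n - 1)).Walk u v, w.length = 2 * k := by
  intro k
  induction k with
  | zero =>
    intro u v hne hk
    have hle : (u.1 ∩ v.1).card ≤ n - 1 := by
      calc (u.1 ∩ v.1).card ≤ u.1.card := Finset.card_le_card (Finset.inter_subset_left)
        _ = n - 1 := u.2
    have hcard : (u.1 ∩ v.1).card = n - 1 := by omega
    have h1 : u.1 ∩ v.1 = u.1 :=
      Finset.eq_of_subset_of_card_le Finset.inter_subset_left (by rw [hcard, u.2])
    have h2 : u.1 ∩ v.1 = v.1 :=
      Finset.eq_of_subset_of_card_le Finset.inter_subset_right (by rw [hcard, v.2])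
    have : u = v := Subtype.ext (h1 ▸ h2)
    subst this
    exact ⟨SimpleGraph.Walk.nil, rfl⟩
  | succ k ih =>
    intro u v hne hk
    set t := (u.1 ∩ v.1).card with ht
    have htlt : t < n - 1 := by omega
    have hcu : u.1.card = n - 1 := u.2
    have hcv : v.1.card = n - 1 := v.2
    -- pick a ∈ u \ v, b ∈ v \ u
    have hsd1 : (u.1 \ v.1).Nonempty := by
      rw [← Finset.card_pos]
      have := Finset.card_sdiff_add_card_inter u.1 v.1
      omega
    have hsd2 : (v.1 \ u.1).Nonempty := by
      rw [← Finset.card_pos]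
      have := Finset.card_sdiff_add_card_inter v.1 u.1
      rw [Finset.inter_comm] at this
      omega
    obtain ⟨a, ha⟩ := hsd1
    obtain ⟨b, hb⟩ := hsd2
    rw [Finset.mem_sdiff] at ha hb
    have hau : a ∈ u.1 := ha.1
    have hav : a ∉ v.1 := ha.2
    have hbv : b ∈ v.1 := hb.1
    have hbu : b ∉ u.1 := hb.2
    -- define A' and C
    set A' : Finset (Fin (2 * n - 1)) := insert b (u.1.erase a) with hA'
    have hA'card : A'.card = n - 1 := by
      rw [hA', Finset.card_insert_of_notMem (fun h => hbu (Finset.erase_subset _ _ h)),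
        Finset.card_erase_of_mem hau, hcu]
      omega
    set C : Finset (Fin (2 * n - 1)) := (insert b u.1)ᶜ with hC
    have hCcard : C.card = n - 1 := by
      rw [hC, Finset.card_compl, Finset.card_insert_of_notMem hbu, hcu]
      simp only [Fintype.card_fin]
      omega
    have hunon : u.1.Nonempty := by
      rw [← Finset.card_pos, hcu]; omega
    -- adjacency u — C
    have hdisjuC : Disjoint u.1 C := by
      rw [hC]
      exact (disjoint_compl_right).mono_left (Finset.subset_insert _ _)
    have hadj1 : (kneserGraph (2 * n - 1) (n - 1)).Adj u ⟨C, hCcard⟩ := by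
      refine ⟨fun h => ?_, hdisjuC⟩
      obtain ⟨x, hx⟩ := hunon
      have : u.1 = C := congrArg Subtype.val h
      exact (Finset.disjoint_left.mp hdisjuC hx) (this ▸ hx)
    -- adjacency C — A'
    have hA'sub : A' ⊆ insert b u.1 :=
      Finset.insert_subset_insert _ (Finset.erase_subset _ _)
    have hdisjCA' : Disjoint C A' := by
      rw [hC]
      exact (disjoint_compl_left).mono_right hA'sub
    have hA'non : A'.Nonempty := ⟨b, Finset.mem_insert_self _ _⟩
    have hadj2 : (kneserGraph (2 * n - 1) (n - 1)).Adj ⟨C, hCcard⟩ ⟨A', hA'card⟩ := by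
      refine ⟨fun h => ?_, hdisjCA'⟩
      obtain ⟨x, hx⟩ := hA'non
      have : C = A' := congrArg Subtype.val h
      exact (Finset.disjoint_right.mp hdisjCA' hx) (this ▸ hx)
    -- intersection of A' with v grows
    have hinter : A' ∩ v.1 = insert b (u.1 ∩ v.1) := by
      rw [hA']
      ext x
      simp only [Finset.mem_inter, Finset.mem_insert, Finset.mem_erase]
      constructor
      · rintro ⟨h1 | ⟨hxa, hxu⟩, h2⟩
        · exact Or.inl h1
        · exact Or.inr ⟨hxu, h2⟩
      · rintro (rfl | ⟨hxu, hxv⟩)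
        · exact ⟨Or.inl rfl, hbv⟩
        · exact ⟨Or.inr ⟨fun h => hav (h ▸ hxv), hxu⟩, hxv⟩
    have hintercard : ((⟨A', hA'card⟩ : {s : Finset (Fin (2 * n - 1)) // s.card = n - 1}).1 ∩ v.1).card = t + 1 := by
      simp only [hinter]
      rw [Finset.card_insert_of_notMem (fun h => hbu (Finset.mem_inter.mp h).1)]
    obtain ⟨w', hw'⟩ := ih ⟨A', hA'card⟩ v
      (by simp only [hinter]; exact ⟨b, Finset.mem_insert_self _ _⟩)
      (by rw [hintercard]; omega)
    exact ⟨SimpleGraph.Walk.cons hadj1 (SimpleGraph.Walk.cons hadj2 w'), by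
      simp [SimpleGraph.Walk.length_cons, hw']; ring⟩

/-- For `n ≥ 2`, any two non-adjacent vertices (possibly equal) of
the Kneser graph `K(2n-1, n-1)` are joined by a walk of even length strictly
less than `2n-2`. -/
theorem stmt10 (n : ℕ) (hn : 2 ≤ n)
    (u v : {s : Finset (Fin (2 * n - 1)) // s.card = n - 1})
    (huv : ¬ (kneserGraph (2 * n - 1) (n - 1)).Adj u v) :
    ∃ w : (kneserGraph (2 * n - 1) (n - 1)).Walk u v,
      Even w.length ∧ w.length < 2 * n - 2 := by
  obtain rfl | hne := eq_or_ne u v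
  · exact ⟨SimpleGraph.Walk.nil, by simp, by simp; omega⟩
  · have hndisj : ¬ Disjoint u.1 v.1 := fun h => huv ⟨hne, h⟩
    have hne' : (u.1 ∩ v.1).Nonempty := by
      rw [Finset.not_disjoint_iff_nonempty_inter] at hndisj; exact hndisj
    have ht1 : 1 ≤ (u.1 ∩ v.1).card := Finset.card_pos.mpr hne'
    obtain ⟨w, hw⟩ := kneser_aux n hn (n - 1 - (u.1 ∩ v.1).card) u v hne' rfl
    refine ⟨w, ⟨_, by rw [hw]; ring⟩, ?_⟩
    rw [hw]
    have : (u.1 ∩ v.1).card ≤ n - 1 := by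
      have := Finset.card_le_card (Finset.inter_subset_left : u.1 ∩ v.1 ⊆ u.1)
      rw [u.2] at this; exact this
    omega
end

section
/- Let k ≥ 1 and n > 2k. Every pair of distinct vertices of the Kneser graph K(n,k) is joined by a walk of length 3 if and only if n ≥ 3k−1. -/
open Finset

lemma kneser_adj {n k : ℕ} (hk : 1 ≤ k) (u v : {s : Finset (Fin n) // s.card = k})
    (h : Disjoint u.1 v.1) : (kneserGraph n k).Adj u v := by
  refine ⟨fun he => ?_, h⟩
  rw [he, disjoint_self] at h
  have := v.2
  rw [h] at this
  simp at this
  omega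

lemma core_ineq {n k : ℕ} (u v a b : Finset (Fin n))
    (hu : u.card = k) (hv : v.card = k) (ha : a.card = k) (hb : b.card = k)
    (hau : Disjoint a u) (hab : Disjoint a b) (hbv : Disjoint b v)
    (hvu : (v \ u).card ≤ 1) : 3 * k - 1 ≤ n := by
  have h1 : a ∩ v ⊆ v \ u := by
    intro z hz
    rw [mem_inter] at hz
    rw [mem_sdiff]
    exact ⟨hz.2, fun hzu => (disjoint_left.mp hau hz.1) hzu⟩
  have h2 : (a ∩ v).card ≤ 1 := le_trans (card_le_card h1) hvu
  have h3 : (a ∪ v).card + (a ∩ v).card = a.card + v.card := card_union_add_card_inter a v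
  have h4 : Disjoint b (a ∪ v) := disjoint_union_right.mpr ⟨hab.symm, hbv⟩
  have h5 : (b ∪ (a ∪ v)).card = b.card + (a ∪ v).card := card_union_of_disjoint h4
  have h6 : (b ∪ (a ∪ v)).card ≤ n := by
    have := card_le_univ (b ∪ (a ∪ v))
    simpa using this
  omega

/-- For `k ≥ 1` and `n > 2k`, every pair of distinct vertices of
the Kneser graph `K(n,k)` is joined by a walk of length `3` iff `n ≥ 3k - 1`. -/
theorem stmt12 (n k : ℕ) (hk : 1 ≤ k) (hn : 2 * k < n) :
    (∀ u v : {s : Finset (Fin n) // s.card = k}, u ≠ v →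
      ∃ w : (kneserGraph n k).Walk u v, w.length = 3) ↔ 3 * k - 1 ≤ n := by
  constructor
  · intro H
    obtain ⟨S, -, hS⟩ := Finset.exists_subset_card_eq
      (show k + 1 ≤ (univ : Finset (Fin n)).card by simp; omega)
    obtain ⟨x, hxS, y, hyS, hxy⟩ := Finset.one_lt_card.mp (by omega : 1 < S.card)
    set u := S.erase x with hu_def
    set v := S.erase y with hv_def
    have hu : u.card = k := by rw [hu_def, card_erase_of_mem hxS, hS]; omega
    have hv : v.card = k := by rw [hv_def, card_erase_of_mem hyS, hS]; omega
    have hxv : x ∈ v := mem_erase.mpr ⟨hxy, hxS⟩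
    have hxu : x ∉ u := notMem_erase x S
    have hne : (⟨u, hu⟩ : {s : Finset (Fin n) // s.card = k}) ≠ ⟨v, hv⟩ := by
      intro h
      rw [Subtype.mk_eq_mk] at h
      exact hxu (h ▸ hxv)
    have hvu : (v \ u).card ≤ 1 := by
      have : v \ u ⊆ {x} := by
        intro z hz
        rw [mem_sdiff, hv_def, hu_def, mem_erase, mem_erase] at hz
        rw [mem_singleton]
        by_contra hzx
        exact hz.2 ⟨hzx, hz.1.2⟩
      simpa using card_le_card this
    obtain ⟨w, hw⟩ := H ⟨u, hu⟩ ⟨v, hv⟩ hne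
    set a := w.getVert 1 with ha_def
    set b := w.getVert 2 with hb_def
    have h1 : (kneserGraph n k).Adj ⟨u, hu⟩ a := by
      have := w.adj_getVert_succ (by omega : 0 < w.length)
      rwa [SimpleGraph.Walk.getVert_zero] at this
    have h2 : (kneserGraph n k).Adj a b := w.adj_getVert_succ (by omega : 1 < w.length)
    have h3 : (kneserGraph n k).Adj b ⟨v, hv⟩ := by
      have := w.adj_getVert_succ (by omega : 2 < w.length)
      have h3' : w.getVert 3 = ⟨v, hv⟩ := by
        rw [← hw]; exact w.getVert_length
      rwa [h3'] at this
    exact core_ineq u v a.1 b.1 hu hv a.2 b.2 h1.2.symm h2.2 h3.2 hvu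
  · intro hn3 u v huv
    have hne : u.1 ≠ v.1 := fun h => huv (Subtype.ext h)
    have hnsub : ¬ v.1 ⊆ u.1 := fun h =>
      hne (Finset.eq_of_subset_of_card_le h (by rw [u.2, v.2])).symm
    obtain ⟨x, hx⟩ := Finset.sdiff_nonempty.mpr hnsub
    rw [mem_sdiff] at hx
    have hDcard : k - 1 ≤ (u.1 ∪ v.1)ᶜ.card := by
      rw [card_compl]
      have h1 : (u.1 ∪ v.1).card ≤ 2 * k := by
        have := card_union_le u.1 v.1
        rw [u.2, v.2] at this
        omega
      simp only [Fintype.card_fin]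
      omega
    obtain ⟨a', ha'D, ha'⟩ := Finset.exists_subset_card_eq hDcard
    have hxa' : x ∉ a' := by
      intro hxa'
      have := ha'D hxa'
      rw [mem_compl] at this
      exact this (mem_union_right _ hx.1)
    set a := insert x a' with ha_def
    have hacard : a.card = k := by
      rw [ha_def, card_insert_of_notMem hxa', ha']
      omega
    have hadis : Disjoint a u.1 := by
      rw [disjoint_left]
      intro z hz hzu
      rw [ha_def, mem_insert] at hz
      rcases hz with rfl | hz
      · exact hx.2 hzu
      · have := ha'D hz
        rw [mem_compl] at this
        exact this (mem_union_left _ hzu)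
    have hav : (a ∪ v.1).card ≤ 2 * k - 1 := by
      have hsub : a ∪ v.1 ⊆ a' ∪ v.1 := by
        rw [ha_def]
        intro z hz
        rw [mem_union, mem_insert] at hz
        rcases hz with (rfl | hz) | hz
        · exact mem_union_right _ hx.1
        · exact mem_union_left _ hz
        · exact mem_union_right _ hz
      have h1 := card_le_card hsub
      have h2 := card_union_le a' v.1
      rw [ha', v.2] at h2
      omega
    have hEcard : k ≤ (a ∪ v.1)ᶜ.card := by
      rw [card_compl]
      simp only [Fintype.card_fin]
      omega
    obtain ⟨b, hbE, hbcard⟩ := Finset.exists_subset_card_eq hEcard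
    have hbdis : Disjoint b (a ∪ v.1) :=
      Finset.disjoint_left.mpr (fun z hz hz2 => (mem_compl.mp (hbE hz)) hz2)
    rw [disjoint_union_right] at hbdis
    refine ⟨SimpleGraph.Walk.cons (kneser_adj hk u ⟨a, hacard⟩ hadis.symm)
      (SimpleGraph.Walk.cons (kneser_adj hk ⟨a, hacard⟩ ⟨b, hbcard⟩ hbdis.1.symm)
      (SimpleGraph.Walk.cons (kneser_adj hk ⟨b, hbcard⟩ v hbdis.2)
      SimpleGraph.Walk.nil)), rfl⟩
end

section
/- Let k ≥ 1 and n > 2k. Every pair of non-adjacent vertices of the Kneser graph K(n,k) is joined by a walk of length 2 (i.e. has a common neighbour) if and only if n ≥ 3k−1. -/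
/-- For `k ≥ 1` and `n > 2k`, every pair of non-adjacent vertices
of the Kneser graph `K(n,k)` is joined by a walk of length `2` iff `n ≥ 3k - 1`. -/
theorem stmt13 (n k : ℕ) (hk : 1 ≤ k) (hn : 2 * k < n) :
    (∀ u v : {s : Finset (Fin n) // s.card = k}, ¬ (kneserGraph n k).Adj u v →
      ∃ w : (kneserGraph n k).Walk u v, w.length = 2) ↔ 3 * k - 1 ≤ n := by
  constructor
  · intro H
    -- build u, v sharing exactly the element k-1
    have hkn : k ≤ n := by omega
    have h2k1 : 2 * k - 1 ≤ n := by omega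
    set e1 : Fin k ↪ Fin n := Fin.castLEEmb hkn with he1
    set e2 : Fin k ↪ Fin n :=
      ⟨fun i => ⟨i.val + (k - 1), by omega⟩, by
        intro a b h
        have : a.val + (k - 1) = b.val + (k - 1) := congrArg Fin.val h
        exact Fin.ext (by omega)⟩ with he2
    set u : {s : Finset (Fin n) // s.card = k} :=
      ⟨Finset.univ.map e1, by simp⟩ with hu
    set v : {s : Finset (Fin n) // s.card = k} :=
      ⟨Finset.univ.map e2, by simp⟩ with hv
    have hmemu : ∀ i : Fin n, i ∈ u.1 ↔ i.val < k := by
      intro i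
      simp only [hu, he1, Finset.mem_map, Finset.mem_univ, true_and]
      constructor
      · rintro ⟨a, rfl⟩; simp [Fin.castLEEmb]
      · intro h; exact ⟨⟨i.val, h⟩, by simp [Fin.castLEEmb, Fin.ext_iff]⟩
    have hmemv : ∀ i : Fin n, i ∈ v.1 ↔ k - 1 ≤ i.val ∧ i.val < 2 * k - 1 := by
      intro i
      simp only [hv, he2, Finset.mem_map, Finset.mem_univ, true_and,
        Function.Embedding.coeFn_mk]
      constructor
      · rintro ⟨a, rfl⟩; have := a.isLt; show k - 1 ≤ a.val + (k - 1) ∧ a.val + (k - 1) < 2 * k - 1; omega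
      · rintro ⟨h1, h2⟩
        exact ⟨⟨i.val - (k - 1), by omega⟩, Fin.ext (show i.val - (k - 1) + (k - 1) = i.val by omega)⟩
    have hnadj : ¬ (kneserGraph n k).Adj u v := by
      intro h
      have : (⟨k - 1, by omega⟩ : Fin n) ∈ u.1 := (hmemu _).mpr (by simp; omega)
      have h2 : (⟨k - 1, by omega⟩ : Fin n) ∈ v.1 := (hmemv _).mpr (by simp; omega)
      exact Finset.not_disjoint_iff.mpr ⟨_, this, h2⟩ h.2
    obtain ⟨w, hw⟩ := H u v hnadj
    set m := w.getVert 1 with hm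
    have h01 : (kneserGraph n k).Adj u m := by
      have := w.adj_getVert_succ (i := 0) (by omega)
      rwa [w.getVert_zero] at this
    have h12 : (kneserGraph n k).Adj m v := by
      have := w.adj_getVert_succ (i := 1) (by omega)
      rwa [show (1 : ℕ) + 1 = w.length from by omega, w.getVert_length] at this
    -- m.1 is disjoint from u.1 ∪ v.1, which has card 2k-1
    have hUcard : (u.1 ∪ v.1).card = 2 * k - 1 := by
      have : u.1 ∪ v.1 = Finset.univ.map (Fin.castLEEmb h2k1) := by
        ext i
        simp only [Finset.mem_union, hmemu, hmemv, Finset.mem_map, Finset.mem_univ,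
          true_and]
        constructor
        · intro h
          exact ⟨⟨i.val, by omega⟩, by simp [Fin.castLEEmb, Fin.ext_iff]⟩
        · rintro ⟨a, rfl⟩
          have := a.isLt
          simp [Fin.castLEEmb]; omega
      rw [this]; simp
    have hdisj : Disjoint m.1 (u.1 ∪ v.1) := by
      rw [Finset.disjoint_union_right]
      exact ⟨h01.2.symm, h12.2⟩
    have hle : (m.1 ∪ (u.1 ∪ v.1)).card ≤ n := by
      calc (m.1 ∪ (u.1 ∪ v.1)).card ≤ (Finset.univ : Finset (Fin n)).card :=
            Finset.card_le_univ _
        _ = n := by simp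
    rw [Finset.card_union_of_disjoint hdisj, m.2, hUcard] at hle
    omega
  · intro hn3 u v hnadj
    have hcard : (u.1 ∪ v.1).card ≤ 2 * k - 1 := by
      by_cases huv : u = v
      · subst huv
        rw [Finset.union_self, u.2]; omega
      · have hnd : ¬ Disjoint u.1 v.1 := fun hd => hnadj ⟨huv, hd⟩
        obtain ⟨a, ha1, ha2⟩ := Finset.not_disjoint_iff.mp hnd
        have hinter : 1 ≤ (u.1 ∩ v.1).card :=
          Finset.card_pos.mpr ⟨a, Finset.mem_inter.mpr ⟨ha1, ha2⟩⟩
        have := Finset.card_union_add_card_inter u.1 v.1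
        rw [u.2, v.2] at this
        omega
    have hcompl : k ≤ (u.1 ∪ v.1)ᶜ.card := by
      rw [Finset.card_compl]
      simp only [Fintype.card_fin]
      omega
    obtain ⟨t, ht, htcard⟩ := Finset.exists_subset_card_eq hcompl
    have htd : ∀ i ∈ t, i ∉ u.1 ∪ v.1 := by
      intro i hi
      have := ht hi
      simpa [Finset.mem_compl] using this
    have hdu : Disjoint u.1 t := by
      rw [Finset.disjoint_right]
      intro i hi hiu
      exact htd i hi (Finset.mem_union_left _ hiu)
    have hdv : Disjoint t v.1 := by
      rw [Finset.disjoint_left]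
      intro i hi hiv
      exact htd i hi (Finset.mem_union_right _ hiv)
    set m : {s : Finset (Fin n) // s.card = k} := ⟨t, htcard⟩ with hm
    have hne1 : u ≠ m := by
      intro h
      have heq : u.1 = t := congrArg Subtype.val h
      rw [heq] at hdu
      have : t = ∅ := by simpa using disjoint_self.mp hdu
      rw [this] at htcard
      simp at htcard
      omega
    have hne2 : m ≠ v := by
      intro h
      have heq : t = v.1 := congrArg Subtype.val h
      rw [← heq] at hdv
      have : t = ∅ := by simpa using disjoint_self.mp hdv
      rw [this] at htcard
      simp at htcard
      omega
    exact ⟨SimpleGraph.Walk.cons ⟨hne1, hdu⟩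
      (SimpleGraph.Walk.cons ⟨hne2, hdv⟩ SimpleGraph.Walk.nil), rfl⟩
end

section
/- Let G be a finite simple graph containing a cycle of length 4. Then there exist two families P₀, P₁ : V(G) → Matrix (Fin 2 × Fin 2) (Fin 2 × Fin 2) ℂ of self-adjoint idempotent matrices such that ∑_{u ∈ V(G)} P₀ u = 1 = ∑_{u ∈ V(G)} P₁ u, P₀ u · P₁ v = 0 = P₁ v · P₀ u whenever u and v are not adjacent in G, and there exist vertices u, v with P₀ u · P₁ v ≠ P₁ v · P₀ u. -/
/-!
On a 4-cycle `a - b - c - d - a`, let the first family be the two-outcome measurement `{p, 1 - p}`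
placed on `{a, c}` and the second `{q, 1 - q}` placed on `{b, d}`, all other projections being `0`.
Every vertex of `{a, c}` is adjacent to every vertex of `{b, d}`, so the orthogonality relations
for non-adjacent pairs hold for trivial reasons, and nothing constrains `p` and `q` to commute:
the projections onto `e₁` and `(e₁ + e₂)/√2`, tensored with `1` to act on `ℂ² ⊗ ℂ²`, do not.
-/

open Matrix Kronecker

namespace SimpleGraph.Walk

variable {V : Type*} {G : SimpleGraph V}

lemma IsCycle.exists_adj_of_length_eq_four {v : V} {p : G.Walk v v} (hp : p.IsCycle)
    (hl : p.length = 4) :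
    ∃ a b c d, G.Adj a b ∧ G.Adj b c ∧ G.Adj c d ∧ G.Adj d a ∧ a ≠ c ∧ b ≠ d := by
  have hadj (i : ℕ) (hi : i < 4) : G.Adj (p.getVert i) (p.getVert (i + 1)) :=
    p.adj_getVert_succ (hl ▸ hi)
  have hclose : p.getVert 4 = p.getVert 0 := by rw [← hl, getVert_length, getVert_zero]
  refine ⟨p.getVert 0, p.getVert 1, p.getVert 2, p.getVert 3, hadj 0 (by norm_num),
    hadj 1 (by norm_num), hadj 2 (by norm_num), hclose ▸ hadj 3 (by norm_num),
    hp.getVert_sub_one_ne_getVert_add_one (i := 1) (by omega),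
    hp.getVert_sub_one_ne_getVert_add_one (i := 2) (by omega)⟩

end SimpleGraph.Walk

lemma IsStarProjection.kronecker_one {m n R : Type*} [Fintype m] [Fintype n] [DecidableEq n]
    [CommRing R] [StarRing R] {A : Matrix m m R} (hA : IsStarProjection A) :
    IsStarProjection (A ⊗ₖ (1 : Matrix n n R)) := by
  rw [isStarProjection_iff'] at hA ⊢
  constructor
  · rw [← mul_kronecker_mul, hA.1, mul_one]
  · rw [star_eq_conjTranspose, conjTranspose_kronecker, conjTranspose_one,
      ← star_eq_conjTranspose, hA.2]

lemma Matrix.kronecker_one_injective {m n R : Type*} [DecidableEq n] [Nonempty n] [Semiring R] :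
    Function.Injective (fun A : Matrix m m R => A ⊗ₖ (1 : Matrix n n R)) := by
  intro A B h
  obtain ⟨k⟩ := ‹Nonempty n›
  ext i j
  simpa using congrFun (congrFun h (i, k)) (j, k)

lemma Matrix.exists_isStarProjection_not_commute (𝕜 : Type*) [RCLike 𝕜] :
    ∃ p q : Matrix (Fin 2) (Fin 2) 𝕜,
      IsStarProjection p ∧ IsStarProjection q ∧ ¬ Commute p q := by
  refine ⟨!![1, 0; 0, 0], !![2⁻¹, 2⁻¹; 2⁻¹, 2⁻¹], ?_, ?_, ?_⟩
  · rw [isStarProjection_iff']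
    constructor <;> ext i j <;> fin_cases i <;> fin_cases j <;> simp [mul_apply]
  · rw [isStarProjection_iff']
    constructor <;> ext i j <;> fin_cases i <;> fin_cases j <;> norm_num [mul_apply]
  · intro h
    have := congrFun (congrFun h.eq 1) 0
    simp at this

lemma Matrix.exists_isStarProjection_not_commute_of_prod (𝕜 n : Type*) [RCLike 𝕜] [Fintype n]
    [DecidableEq n] [Nonempty n] :
    ∃ p q : Matrix (Fin 2 × n) (Fin 2 × n) 𝕜,
      IsStarProjection p ∧ IsStarProjection q ∧ ¬ Commute p q := by
  obtain ⟨p, q, hp, hq, hpq⟩ := exists_isStarProjection_not_commute 𝕜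
  refine ⟨p ⊗ₖ 1, q ⊗ₖ 1, hp.kronecker_one, hq.kronecker_one, fun h => hpq ?_⟩
  refine kronecker_one_injective (n := n) ?_
  simpa only [← mul_kronecker_mul, mul_one] using h.eq

section PairPartition

variable {V R : Type*} [DecidableEq V] [Ring R]

def pairPartition (a c : V) (p : R) : V → R := Pi.single a p + Pi.single c (1 - p)

variable {a c : V} {p : R}

lemma pairPartition_apply_left (hac : a ≠ c) : pairPartition a c p a = p := by
  simp [pairPartition, hac.symm]

lemma pairPartition_apply_right (hac : a ≠ c) : pairPartition a c p c = 1 - p := by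
  simp [pairPartition, hac]

lemma pairPartition_apply_of_ne {u : V} (hua : u ≠ a) (huc : u ≠ c) :
    pairPartition a c p u = 0 := by
  simp [pairPartition, hua, huc]

lemma sum_pairPartition [Fintype V] : ∑ u, pairPartition a c p u = 1 := by
  simp [pairPartition, Finset.sum_add_distrib]

lemma isStarProjection_pairPartition [StarRing R] (hac : a ≠ c) (hp : IsStarProjection p)
    (u : V) :
    IsStarProjection (pairPartition a c p u) := by
  by_cases hua : u = a
  · subst hua; rw [pairPartition_apply_left hac]; exact hp
  by_cases huc : u = c
  · subst huc; rw [pairPartition_apply_right hac]; exact hp.one_sub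
  rw [pairPartition_apply_of_ne hua huc]; exact .zero _

lemma eq_or_eq_of_pairPartition_apply_ne_zero {u : V} (h : pairPartition a c p u ≠ 0) :
    u = a ∨ u = c := by
  by_contra! hne
  exact h (pairPartition_apply_of_ne hne.1 hne.2)

end PairPartition

lemma SimpleGraph.pairPartition_mul_eq_zero_of_not_adj {V R : Type*} [DecidableEq V] [Ring R]
    {G : SimpleGraph V} {a b c d : V} (hab : G.Adj a b) (hbc : G.Adj b c) (hcd : G.Adj c d)
    (hda : G.Adj d a) (p q : R) {u w : V} (huw : ¬ G.Adj u w) :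
    pairPartition a c p u * pairPartition b d q w = 0 ∧
      pairPartition b d q w * pairPartition a c p u = 0 := by
  have hzero : pairPartition a c p u = 0 ∨ pairPartition b d q w = 0 := by
    by_contra! ⟨hu, hw⟩
    rcases eq_or_eq_of_pairPartition_apply_ne_zero hu with rfl | rfl <;>
      rcases eq_or_eq_of_pairPartition_apply_ne_zero hw with rfl | rfl
    exacts [huw hab, huw hda.symm, huw hbc.symm, huw hcd]
  rcases hzero with h | h <;> simp [h]

/-- If a finite simple graph `G` contains a cycle of length `4`,
then there are families `P₀, P₁ : V(G) → M₄(ℂ)` (matrices indexed by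
`Fin 2 × Fin 2`) of self-adjoint idempotents satisfying the relations of
`Mor⁺(K₂, G)` (each family sums to `1`, and `P₀ u * P₁ v = 0 = P₁ v * P₀ u`
whenever `u ≁ v`) together with a pair `u, v` for which `P₀ u` and `P₁ v`
do not commute. -/
theorem stmt16 {V : Type*} [Fintype V] [DecidableEq V] (G : SimpleGraph V)
    (h4 : ∃ (v : V) (c : G.Walk v v), c.IsCycle ∧ c.length = 4) :
    ∃ P₀ P₁ : V → Matrix (Fin 2 × Fin 2) (Fin 2 × Fin 2) ℂ,
      (∀ u, (P₀ u)ᴴ = P₀ u ∧ P₀ u * P₀ u = P₀ u) ∧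
      (∀ u, (P₁ u)ᴴ = P₁ u ∧ P₁ u * P₁ u = P₁ u) ∧
      (∑ u : V, P₀ u = 1) ∧ (∑ u : V, P₁ u = 1) ∧
      (∀ u v, ¬ G.Adj u v → P₀ u * P₁ v = 0 ∧ P₁ v * P₀ u = 0) ∧
      (∃ u v, P₀ u * P₁ v ≠ P₁ v * P₀ u) := by
  obtain ⟨v, cycle, hcycle, hlength⟩ := h4
  obtain ⟨a, b, c, d, hab, hbc, hcd, hda, hac, hbd⟩ :=
    hcycle.exists_adj_of_length_eq_four hlength
  obtain ⟨p, q, hp, hq, hpq⟩ := exists_isStarProjection_not_commute_of_prod ℂ (Fin 2)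
  have hproj {x y : V} {r : Matrix (Fin 2 × Fin 2) (Fin 2 × Fin 2) ℂ} (hxy : x ≠ y)
      (hr : IsStarProjection r) (u : V) :
      (pairPartition x y r u)ᴴ = pairPartition x y r u ∧
        pairPartition x y r u * pairPartition x y r u = pairPartition x y r u :=
    have h := isStarProjection_pairPartition hxy hr u
    ⟨h.isSelfAdjoint, h.isIdempotentElem⟩
  refine ⟨pairPartition a c p, pairPartition b d q, hproj hac hp, hproj hbd hq,
    sum_pairPartition, sum_pairPartition,
    fun u w => G.pairPartition_mul_eq_zero_of_not_adj hab hbc hcd hda p q, a, b, ?_⟩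
  rwa [pairPartition_apply_left hac, pairPartition_apply_left hbd]
end

section
/- Let k ≥ 4. There exists a family P : ZMod k → ZMod k → Matrix (Fin 2) (Fin 2) ℂ of self-adjoint idempotent matrices such that ∑_{b ∈ ZMod k} P a b = 1 for every a, P a b · P a' b = 0 whenever a ≠ a', and there exist a, b, a', b' ∈ ZMod k with P a b · P a' b' ≠ P a' b' · P a b. -/
/-!
Take an involution `σ` of `ZMod k` (here `a ↦ 1 - a`) and projections `Q a` constant on its
orbits, and let row `a` of `P` carry `Q a` in column `a` and `1 - Q a` in column `σ a`.
Column `b` is then supported on the rows `b` and `σ b`, where it holds the complementary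
projections `Q b` and `1 - Q b`; hence columns are orthogonal. For `k ≥ 4` the orbits `{0, 1}`
and `{2, -1}` are distinct and have two elements each, so putting two non-commuting
projections on them yields a non-commuting pair.
-/

open Matrix

section PairedProjections

variable {α R : Type*} [DecidableEq α] [Ring R]

def pairedProjections (σ : α → α) (Q : α → R) (a b : α) : R :=
  (if b = a then Q a else 0) + (if b = σ a then 1 - Q a else 0)

variable {σ : α → α} {Q : α → R}

lemma pairedProjections_self_of_ne {a : α} (h : σ a ≠ a) :
    pairedProjections σ Q a a = Q a := by
  simp [pairedProjections, Ne.symm h]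

lemma pairedProjections_of_ne (hσ : Function.Involutive σ) {b : α} (h : σ b ≠ b) :
    pairedProjections σ Q (σ b) b = 1 - Q (σ b) := by
  simp [pairedProjections, Ne.symm h, hσ b]

lemma eq_or_eq_of_pairedProjections_ne_zero (hσ : Function.Involutive σ) {a b : α}
    (h : pairedProjections σ Q a b ≠ 0) : a = b ∨ a = σ b := by
  by_contra! hab
  have hba : b ≠ σ a := fun hba ↦ hab.2 (by rw [hba, hσ a])
  simp [pairedProjections, Ne.symm hab.1, hba] at h

lemma isStarProjection_pairedProjections [StarRing R] (hQ : ∀ a, IsStarProjection (Q a))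
    (a b : α) : IsStarProjection (pairedProjections σ Q a b) := by
  unfold pairedProjections
  split_ifs
  · rw [add_sub_cancel]; exact IsStarProjection.one R
  · rw [add_zero]; exact hQ a
  · rw [zero_add]; exact (hQ a).one_sub
  · rw [add_zero]; exact IsStarProjection.zero R

lemma sum_pairedProjections [Fintype α] (a : α) : ∑ b, pairedProjections σ Q a b = 1 := by
  simp [pairedProjections, Finset.sum_add_distrib]

lemma pairedProjections_mul_pairedProjections (hσ : Function.Involutive σ)
    (hQσ : ∀ a, Q (σ a) = Q a) (hQ : ∀ a, IsIdempotentElem (Q a)) {a a' : α} (b : α)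
    (h : a ≠ a') : pairedProjections σ Q a b * pairedProjections σ Q a' b = 0 := by
  by_contra hne
  rcases eq_or_eq_of_pairedProjections_ne_zero hσ (left_ne_zero_of_mul hne) with rfl | rfl <;>
  rcases eq_or_eq_of_pairedProjections_ne_zero hσ (right_ne_zero_of_mul hne) with rfl | rfl
  · exact h rfl
  · rw [pairedProjections_self_of_ne h.symm, pairedProjections_of_ne hσ h.symm, hQσ] at hne
    exact hne (hQ _).mul_one_sub_self
  · rw [pairedProjections_self_of_ne h, pairedProjections_of_ne hσ h, hQσ] at hne
    exact hne (hQ _).one_sub_mul_self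
  · exact h rfl

end PairedProjections

lemma ZMod.natCast_ne_zero_of_pos_of_lt {m k : ℕ} (h0 : 0 < m) (hm : m < k) :
    (m : ZMod k) ≠ 0 := by
  rw [Ne, ZMod.natCast_eq_zero_iff]
  exact fun h ↦ (Nat.le_of_dvd h0 h).not_gt hm

theorem exists_quantumEnd_completeGraph_not_commute {R : Type*} [Ring R] [StarRing R] {p q : R}
    (hp : IsStarProjection p) (hq : IsStarProjection q) (hpq : p * q ≠ q * p)
    (k : ℕ) [NeZero k] (hk : 4 ≤ k) :
    ∃ P : ZMod k → ZMod k → R,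
      (∀ a b, IsStarProjection (P a b)) ∧
      (∀ a, ∑ b, P a b = 1) ∧
      (∀ a a' b, a ≠ a' → P a b * P a' b = 0) ∧
      (∃ a b a' b', P a b * P a' b' ≠ P a' b' * P a b) := by
  set σ : ZMod k → ZMod k := fun a ↦ 1 - a
  set Q : ZMod k → R := fun a ↦ if a = 0 ∨ a = 1 then p else q
  have hσ : Function.Involutive σ := sub_sub_cancel 1
  have hQσ : ∀ a, Q (σ a) = Q a := fun a ↦ by
    simp only [Q, σ, sub_eq_zero, sub_eq_self, eq_comm (a := (1 : ZMod k)), or_comm]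
  have hQ : ∀ a, IsStarProjection (Q a) := fun a ↦ by
    by_cases h : a = 0 ∨ a = 1 <;> simp only [Q, h, if_true, if_false, hp, hq]
  have hk' : ∀ m : ℕ, 0 < m → m < 4 → (m : ZMod k) ≠ 0 :=
    fun m h0 hm ↦ ZMod.natCast_ne_zero_of_pos_of_lt h0 (by omega)
  have h1 : (1 : ZMod k) ≠ 0 := by exact_mod_cast hk' 1 one_pos (by norm_num)
  have h2 : (2 : ZMod k) ≠ 0 := by exact_mod_cast hk' 2 two_pos (by norm_num)
  have h3 : (3 : ZMod k) ≠ 0 := by exact_mod_cast hk' 3 three_pos (by norm_num)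
  refine ⟨pairedProjections σ Q, isStarProjection_pairedProjections hQ,
    sum_pairedProjections, fun a a' b ↦ pairedProjections_mul_pairedProjections hσ hQσ
      (fun a ↦ (hQ a).isIdempotentElem) b, 0, 0, 2, 2, ?_⟩
  have hσ0 : σ 0 ≠ 0 := by simpa [σ] using h1
  have hσ2 : σ 2 ≠ 2 := fun h ↦ h3 (by linear_combination -h)
  have hQ0 : Q 0 = p := if_pos (Or.inl rfl)
  have hQ2 : Q 2 = q := if_neg (not_or.mpr ⟨h2, fun h ↦ h1 (by linear_combination h)⟩)
  rwa [pairedProjections_self_of_ne hσ0, pairedProjections_self_of_ne hσ2, hQ0, hQ2]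

lemma exists_isStarProjection_mul_ne_mul :
    ∃ p q : Matrix (Fin 2) (Fin 2) ℂ, IsStarProjection p ∧ IsStarProjection q ∧ p * q ≠ q * p := by
  refine ⟨!![1, 0; 0, 0], !![1/2, 1/2; 1/2, 1/2], ⟨?_, ?_⟩, ⟨?_, ?_⟩, fun h ↦ ?_⟩
  · rw [IsIdempotentElem, mul_fin_two]; norm_num
  · ext i j; fin_cases i <;> fin_cases j <;> simp
  · rw [IsIdempotentElem, mul_fin_two]; norm_num
  · ext i j; fin_cases i <;> fin_cases j <;> simp
  · rw [mul_fin_two, mul_fin_two] at h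
    simpa using congr_fun (congr_fun h 0) 1

/-- For `k ≥ 4` there is a family
`P : ZMod k → ZMod k → M₂(ℂ)` of self-adjoint idempotents satisfying the
relations of the quantum endomorphism monoid `End⁺(K_k)` of the complete graph
(rows sum to `1`; columns are orthogonal: `P a b * P a' b = 0` for `a ≠ a'`)
that contains a non-commuting pair; i.e. `K_k` has a non-classical
two-dimensional quantum endomorphism. -/
theorem stmt17 (k : ℕ) [NeZero k] (hk : 4 ≤ k) :
    ∃ P : ZMod k → ZMod k → Matrix (Fin 2) (Fin 2) ℂ,
      (∀ a b, (P a b)ᴴ = P a b ∧ P a b * P a b = P a b) ∧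
      (∀ a, ∑ b : ZMod k, P a b = 1) ∧
      (∀ a a' b, a ≠ a' → P a b * P a' b = 0) ∧
      (∃ a b a' b', P a b * P a' b' ≠ P a' b' * P a b) := by
  obtain ⟨p, q, hp, hq, hpq⟩ := exists_isStarProjection_mul_ne_mul
  obtain ⟨P, hP, hsum, horth, hnc⟩ := exists_quantumEnd_completeGraph_not_commute hp hq hpq k hk
  exact ⟨P, fun a b ↦ ⟨(hP a b).isSelfAdjoint, (hP a b).isIdempotentElem⟩, hsum, horth, hnc⟩
end

section
/- Let G be a finite simple graph and let f, g : G → G be graph homomorphisms whose supports supp(f) = {x : f x ≠ x} and supp(g) = {y : g y ≠ y} are nonempty and disjoint, and which are weakly adjacency congruent: for all x ∈ supp(f) and y ∈ supp(g) with x adjacent to y, f x is adjacent to g y. Then there exists a family P : V(G) → V(G) → Matrix (Fin 2) (Fin 2) ℂ of self-adjoint idempotent matrices such that ∑_{y} P x y = 1 for every x, P x y · P x' y' = 0 whenever x is adjacent to x' and y is not adjacent to y', and there exist x, y, b, b' ∈ V(G) with P x b · P y b' ≠ P y b' · P x b. -/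
/-!
Following Schmidt, choose two non-commuting projections `p, q` and let row `x` of the magic
matrix be `(1 - p - q) e_x + p e_{f x} + q e_{g x}`. Since the supports are disjoint, every row
has the form `(1 - r) e_x + r e_{h x}` with `(r, h) = (p, f)` or `(q, g)`, so its entries are
projections summing to `1`. For `x ~ x'` the product `P x y * P x' y'` splits into four terms,
each of which vanishes unless `y ~ y'`: the cross terms `(1 - p) p` are zero, and otherwise the
required adjacency comes from `f` and `g` being homomorphisms together with disjointness, or, for
the term `p q`, from weak adjacency congruence.
-/

open Matrix

section

variable {V A : Type*}

def WeaklyAdjCongruent {G : SimpleGraph V} (f g : G →g G) : Prop :=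
  ∀ x y, f x ≠ x → g y ≠ y → G.Adj x y → G.Adj (f x) (g y)

theorem WeaklyAdjCongruent.symm {G : SimpleGraph V} {f g : G →g G}
    (h : WeaklyAdjCongruent f g) : WeaklyAdjCongruent g f :=
  fun x y hx hy hxy => (h y x hy hx hxy.symm).symm

variable [Ring A] [DecidableEq V]

theorem piSingle_mul_piSingle_eq_zero {R : V → V → Prop} {a b y y' : V} {c d : A}
    (hcd : c * d ≠ 0 → R a b) (hy : ¬ R y y') :
    (Pi.single a c : V → A) y * (Pi.single b d : V → A) y' = 0 := by
  by_cases ha : y = a <;> by_cases hb : y' = b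
  · subst ha hb
    by_contra h
    exact hy (hcd (by simpa using h))
  all_goals simp [ha, hb]

def twoPointRow (a b : V) (r : A) : V → A :=
  Pi.single a (1 - r) + Pi.single b r

theorem twoPointRow_mul_twoPointRow_eq_zero {R : V → V → Prop} {a b a' b' y y' : V} {r r' : A}
    (hy : ¬ R y y') (haa' : R a a') (hab' : (1 - r) * r' ≠ 0 → R a b')
    (hba' : r * (1 - r') ≠ 0 → R b a') (hbb' : r * r' ≠ 0 → R b b') :
    twoPointRow a b r y * twoPointRow a' b' r' y' = 0 := by
  simp only [twoPointRow, Pi.add_apply, add_mul, mul_add]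
  rw [piSingle_mul_piSingle_eq_zero (fun _ => haa') hy, piSingle_mul_piSingle_eq_zero hab' hy,
    piSingle_mul_piSingle_eq_zero hba' hy, piSingle_mul_piSingle_eq_zero hbb' hy]
  simp

theorem IsStarProjection.twoPointRow_apply [StarRing A] {r : A} (hr : IsStarProjection r)
    (a b y : V) : IsStarProjection (twoPointRow a b r y) := by
  have single_apply {c : A} (hc : IsStarProjection c) (a : V) :
      IsStarProjection ((Pi.single a c : V → A) y) := by
    rw [Pi.single_apply]
    split_ifs
    exacts [hc, .zero A]
  refine (single_apply hr.one_sub a).add (single_apply hr b) ?_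
  simp only [Pi.single_apply]
  split_ifs <;> simp [hr.one_sub_mul_self]

def schmidtFamily (f g : V → V) (p q : A) (x : V) : V → A :=
  Pi.single x (1 - p - q) + Pi.single (f x) p + Pi.single (g x) q

theorem schmidtFamily_comm (f g : V → V) (p q : A) :
    schmidtFamily f g p q = schmidtFamily g f q p := by
  ext x y
  simp only [schmidtFamily, Pi.add_apply]
  rw [sub_right_comm]
  abel

theorem sum_schmidtFamily [Fintype V] (f g : V → V) (p q : A) (x : V) :
    ∑ y, schmidtFamily f g p q x y = 1 := by
  simp only [schmidtFamily, Pi.add_apply, Finset.sum_add_distrib, Finset.sum_pi_single',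
    Finset.mem_univ, if_true]
  abel

theorem schmidtFamily_of_right_fixed {f g : V → V} (p q : A) {x : V} (hx : g x = x) :
    schmidtFamily f g p q x = twoPointRow x (f x) p := by
  rw [schmidtFamily, twoPointRow, hx, add_right_comm, ← Pi.single_add, sub_add_cancel]

theorem schmidtFamily_apply_self_of_right_fixed {f g : V → V} (p q : A) {x : V} (hf : f x ≠ x)
    (hg : g x = x) : schmidtFamily f g p q x (f x) = p := by
  simp [schmidtFamily_of_right_fixed p q hg, twoPointRow, hf]

theorem isStarProjection_schmidtFamily [StarRing A] {f g : V → V} {p q : A}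
    (hp : IsStarProjection p) (hq : IsStarProjection q) (hfg : ∀ x, f x = x ∨ g x = x)
    (x y : V) : IsStarProjection (schmidtFamily f g p q x y) := by
  rcases hfg x with hx | hx
  · rw [schmidtFamily_comm, schmidtFamily_of_right_fixed q p hx]
    exact hq.twoPointRow_apply x (g x) y
  · rw [schmidtFamily_of_right_fixed p q hx]
    exact hp.twoPointRow_apply x (f x) y

variable {G : SimpleGraph V} {f g : G →g G} {p q : A}

theorem schmidtFamily_mul_eq_zero_of_right_fixed (hp : IsIdempotentElem p)
    (hfg : ∀ x, f x = x ∨ g x = x) (hwac : WeaklyAdjCongruent f g) {x x' y y' : V} (hx : g x = x)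
    (hxx' : G.Adj x x') (hyy' : ¬ G.Adj y y') :
    schmidtFamily f g p q x y * schmidtFamily f g p q x' y' = 0 := by
  rw [schmidtFamily_of_right_fixed p q hx]
  by_cases hx' : g x' = x'
  · rw [schmidtFamily_of_right_fixed p q hx']
    exact twoPointRow_mul_twoPointRow_eq_zero hyy' hxx' (absurd hp.one_sub_mul_self)
      (absurd hp.mul_one_sub_self) fun _ => f.map_adj hxx'
  · have hfx' : f x' = x' := (hfg x').resolve_right hx'
    have hxgx' : G.Adj x (g x') := hx ▸ g.map_adj hxx'
    rw [schmidtFamily_comm, schmidtFamily_of_right_fixed q p hfx']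
    refine twoPointRow_mul_twoPointRow_eq_zero hyy' hxx' (fun _ => hxgx')
      (fun _ => hfx' ▸ f.map_adj hxx') fun _ => ?_
    by_cases hfx : f x = x
    · rwa [hfx]
    · exact hwac x x' hfx hx' hxx'

theorem schmidtFamily_mul_eq_zero (hp : IsIdempotentElem p) (hq : IsIdempotentElem q)
    (hfg : ∀ x, f x = x ∨ g x = x) (hwac : WeaklyAdjCongruent f g) {x x' y y' : V}
    (hxx' : G.Adj x x') (hyy' : ¬ G.Adj y y') :
    schmidtFamily f g p q x y * schmidtFamily f g p q x' y' = 0 := by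
  rcases hfg x with hx | hx
  · rw [schmidtFamily_comm]
    exact schmidtFamily_mul_eq_zero_of_right_fixed hq (fun x => (hfg x).symm) hwac.symm hx hxx'
      hyy'
  · exact schmidtFamily_mul_eq_zero_of_right_fixed hp hfg hwac hx hxx' hyy'

end

def projOntoFst : Matrix (Fin 2) (Fin 2) ℂ := !![1, 0; 0, 0]

noncomputable def projOntoDiag : Matrix (Fin 2) (Fin 2) ℂ := !![1 / 2, 1 / 2; 1 / 2, 1 / 2]

theorem isStarProjection_projOntoFst : IsStarProjection projOntoFst := by
  refine isStarProjection_iff'.2 ⟨?_, ?_⟩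
  · rw [projOntoFst, Matrix.mul_fin_two]; norm_num
  · ext i j; fin_cases i <;> fin_cases j <;> simp [projOntoFst]

theorem isStarProjection_projOntoDiag : IsStarProjection projOntoDiag := by
  refine isStarProjection_iff'.2 ⟨?_, ?_⟩
  · rw [projOntoDiag, Matrix.mul_fin_two]; norm_num
  · ext i j; fin_cases i <;> fin_cases j <;> simp [projOntoDiag]

theorem projOntoFst_mul_projOntoDiag_ne :
    projOntoFst * projOntoDiag ≠ projOntoDiag * projOntoFst := by
  intro h
  rw [projOntoFst, projOntoDiag, Matrix.mul_fin_two, Matrix.mul_fin_two] at h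
  simpa using congr_fun₂ h 0 1

/-- Schmidt criterion for endomorphisms, part (a): if a finite
simple graph `G` has two endomorphisms `f, g` with nonempty disjoint supports
that are weakly adjacency congruent, then `G` admits a non-classical
two-dimensional quantum endomorphism: there is a family
`P : V(G) → V(G) → M₂(ℂ)` of self-adjoint idempotents satisfying the relations
of `End⁺(G)` (rows sum to `1`; `P x y * P x' y' = 0` whenever `x ~ x'` and
`y ≁ y'`) containing a non-commuting pair. -/
theorem stmt18 {V : Type*} [Fintype V] (G : SimpleGraph V)
    (f g : G →g G)
    (hf : ∃ x, f x ≠ x) (hg : ∃ y, g y ≠ y)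
    (hdisj : ∀ x, f x ≠ x → g x = x)
    (hwac : ∀ x y, f x ≠ x → g y ≠ y → G.Adj x y → G.Adj (f x) (g y)) :
    ∃ P : V → V → Matrix (Fin 2) (Fin 2) ℂ,
      (∀ x y, (P x y)ᴴ = P x y ∧ P x y * P x y = P x y) ∧
      (∀ x, ∑ y : V, P x y = 1) ∧
      (∀ x x' y y', G.Adj x x' → ¬ G.Adj y y' → P x y * P x' y' = 0) ∧
      (∃ x y b b', P x b * P y b' ≠ P y b' * P x b) := by
  classical
  obtain ⟨x₀, hx₀⟩ := hf
  obtain ⟨y₀, hy₀⟩ := hg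
  have hfg : ∀ x, f x = x ∨ g x = x := fun x => or_iff_not_imp_left.2 (hdisj x)
  have hp := isStarProjection_projOntoFst
  have hq := isStarProjection_projOntoDiag
  refine ⟨schmidtFamily f g projOntoFst projOntoDiag, fun x y => ?_, sum_schmidtFamily f g _ _,
    fun x x' y y' => schmidtFamily_mul_eq_zero hp.isIdempotentElem hq.isIdempotentElem hfg hwac,
    x₀, y₀, f x₀, g y₀, ?_⟩
  · have hP := isStarProjection_schmidtFamily hp hq hfg x y
    exact ⟨hP.isSelfAdjoint, hP.isIdempotentElem⟩
  · rw [schmidtFamily_apply_self_of_right_fixed _ _ hx₀ (hdisj x₀ hx₀), schmidtFamily_comm,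
      schmidtFamily_apply_self_of_right_fixed _ _ hy₀ ((hfg y₀).resolve_right hy₀)]
    exact projOntoFst_mul_projOntoDiag_ne
end

section
/- Let G be a finite simple graph and let f, g : G → G be graph homomorphisms whose supports supp(f) = {x : f x ≠ x} and supp(g) = {y : g y ≠ y} are nonempty and disconnected, meaning they are disjoint and no edge of G joins a vertex of supp(f) to a vertex of supp(g). Then there exists a family P : V(G) → V(G) → Matrix (Fin 2) (Fin 2) ℂ of self-adjoint idempotent matrices such that ∑_{y} P x y = 1 for every x, P x y · P x' y' = 0 whenever x is adjacent to x' and y is not adjacent to y', P x b · P x' b' = P x' b' · P x b whenever x is adjacent to x', and there exist x, y, b, b' ∈ V(G) with P x b · P y b' ≠ P y b' · P x b. -/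
open Matrix

/-!
An endomorphism `h` and a projection `p` give the family `projMix h p`, whose row at `x` puts `p`
in column `h x` and `1 - p` in column `x`. Its entries lie in the commutative algebra generated by
`p`, and `P x y * P x' y' = 0` for `x ~ x'`, `y ≁ y'` reduces to `p (1 - p) = 0` and to `h`
preserving adjacency. By disconnectedness the two ends of an edge are both fixed by `f` or both
fixed by `g`, so gluing `projMix f p` and `projMix g q` keeps the relations, since those between
different rows only involve adjacent rows; non-commuting projections `p`, `q` in `M₂(ℂ)` make
the glued family non-classical.
-/

section projMix

variable {A V : Type*} [Ring A] [DecidableEq V]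

def projMix (h : V → V) (p : A) (x y : V) : A :=
  (if h x = y then p else 0) + (if x = y then 1 - p else 0)

variable {h : V → V} {p : A}

lemma projMix_of_apply_eq_self {x : V} (hx : h x = x) (y : V) :
    projMix h p x y = if x = y then 1 else 0 := by
  unfold projMix
  split_ifs <;> simp_all

lemma projMix_apply_apply_of_ne {x : V} (hx : h x ≠ x) : projMix h p x (h x) = p := by
  simp [projMix, Ne.symm hx]

lemma isStarProjection_projMix [StarRing A] (hp : IsStarProjection p) (x y : V) :
    IsStarProjection (projMix h p x y) := by
  unfold projMix
  split_ifs <;> simp [hp, hp.one_sub]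

lemma sum_projMix [Fintype V] (x : V) : ∑ y, projMix h p x y = 1 := by
  simp [projMix, Finset.sum_add_distrib]

lemma commute_projMix (x x' b b' : V) :
    Commute (projMix h p x b) (projMix h p x' b') := by
  unfold projMix
  split_ifs <;> simp [Commute.sub_left, Commute.sub_right]

lemma projMix_mul_eq_zero_of_not_adj {G : SimpleGraph V} (h : G →g G) (hp : IsIdempotentElem p)
    {x x' y y' : V} (hx : G.Adj x x') (hy : ¬ G.Adj y y') :
    projMix h p x y * projMix h p x' y' = 0 := by
  have hh := h.map_adj hx
  unfold projMix
  split_ifs <;> subst_vars <;> simp_all [hp.mul_one_sub_self, hp.one_sub_mul_self]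

end projMix

section gluedProjMix

variable {A V : Type*} [Ring A] [DecidableEq V] {f g : V → V} {p q : A}

def gluedProjMix (f g : V → V) (p q : A) (x y : V) : A :=
  if g x = x then projMix f p x y else projMix g q x y

lemma gluedProjMix_of_right_fixed {x : V} (hx : g x = x) (y : V) :
    gluedProjMix f g p q x y = projMix f p x y :=
  if_pos hx

lemma gluedProjMix_of_right_not_fixed {x : V} (hx : g x ≠ x) (y : V) :
    gluedProjMix f g p q x y = projMix g q x y :=
  if_neg hx

lemma gluedProjMix_of_left_fixed {x : V} (hx : f x = x) (y : V) :
    gluedProjMix f g p q x y = projMix g q x y := by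
  by_cases hgx : g x = x
  · rw [gluedProjMix_of_right_fixed hgx, projMix_of_apply_eq_self hx,
      projMix_of_apply_eq_self hgx]
  · exact gluedProjMix_of_right_not_fixed hgx y

lemma isStarProjection_gluedProjMix [StarRing A] (hp : IsStarProjection p)
    (hq : IsStarProjection q) (x y : V) : IsStarProjection (gluedProjMix f g p q x y) := by
  unfold gluedProjMix
  split_ifs
  exacts [isStarProjection_projMix hp x y, isStarProjection_projMix hq x y]

lemma sum_gluedProjMix [Fintype V] (x : V) : ∑ y, gluedProjMix f g p q x y = 1 := by
  unfold gluedProjMix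
  split_ifs <;> exact sum_projMix x

variable {G : SimpleGraph V}

lemma fixed_or_fixed_of_adj (hdisj : ∀ x, f x ≠ x → g x = x)
    (hdisc : ∀ x y, f x ≠ x → g y ≠ y → ¬ G.Adj x y) {x x' : V} (hxx' : G.Adj x x') :
    (g x = x ∧ g x' = x') ∨ (f x = x ∧ f x' = x') := by
  have := hdisj x; have := hdisj x'; have := hdisc x x'; have := hdisc x' x
  have := hxx'.symm
  tauto

lemma commute_gluedProjMix (hdisj : ∀ x, f x ≠ x → g x = x)
    (hdisc : ∀ x y, f x ≠ x → g y ≠ y → ¬ G.Adj x y) {x x' : V} (hxx' : G.Adj x x') (b b' : V) :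
    Commute (gluedProjMix f g p q x b) (gluedProjMix f g p q x' b') := by
  rcases fixed_or_fixed_of_adj hdisj hdisc hxx' with ⟨hx, hx'⟩ | ⟨hx, hx'⟩
  · rw [gluedProjMix_of_right_fixed hx, gluedProjMix_of_right_fixed hx']
    exact commute_projMix x x' b b'
  · rw [gluedProjMix_of_left_fixed hx, gluedProjMix_of_left_fixed hx']
    exact commute_projMix x x' b b'

end gluedProjMix

lemma gluedProjMix_mul_eq_zero_of_not_adj {A V : Type*} [Ring A] [DecidableEq V]
    {G : SimpleGraph V} {f g : G →g G} {p q : A} (hp : IsIdempotentElem p)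
    (hq : IsIdempotentElem q) (hdisj : ∀ x, f x ≠ x → g x = x)
    (hdisc : ∀ x y, f x ≠ x → g y ≠ y → ¬ G.Adj x y) {x x' y y' : V} (hx : G.Adj x x')
    (hy : ¬ G.Adj y y') :
    gluedProjMix f g p q x y * gluedProjMix f g p q x' y' = 0 := by
  rcases fixed_or_fixed_of_adj hdisj hdisc hx with ⟨hgx, hgx'⟩ | ⟨hfx, hfx'⟩
  · rw [gluedProjMix_of_right_fixed hgx, gluedProjMix_of_right_fixed hgx']
    exact projMix_mul_eq_zero_of_not_adj f hp hx hy
  · rw [gluedProjMix_of_left_fixed hfx, gluedProjMix_of_left_fixed hfx']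
    exact projMix_mul_eq_zero_of_not_adj g hq hx hy

noncomputable def coordProj : Matrix (Fin 2) (Fin 2) ℂ := !![1, 0; 0, 0]

noncomputable def diagLineProj : Matrix (Fin 2) (Fin 2) ℂ := !![1 / 2, 1 / 2; 1 / 2, 1 / 2]

lemma isStarProjection_coordProj : IsStarProjection coordProj := by
  rw [isStarProjection_iff', star_eq_conjTranspose]
  constructor <;> ext i j <;> fin_cases i <;> fin_cases j <;> simp [coordProj]

lemma isStarProjection_diagLineProj : IsStarProjection diagLineProj := by
  rw [isStarProjection_iff', star_eq_conjTranspose]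
  constructor <;> ext i j <;> fin_cases i <;> fin_cases j <;> norm_num [diagLineProj]

lemma coordProj_mul_diagLineProj_ne : coordProj * diagLineProj ≠ diagLineProj * coordProj := by
  intro h
  simpa [coordProj, diagLineProj] using congrFun (congrFun h 0) 1

/-- Schmidt criterion for endomorphisms, part (b): if a finite
simple graph `G` has two endomorphisms `f, g` with nonempty disconnected
supports (disjoint, and no edge of `G` joins them), then `G` admits a
non-classical two-dimensional oracular quantum endomorphism: there is a family
`P : V(G) → V(G) → M₂(ℂ)` of self-adjoint idempotents satisfying the relations
of `End^{o+}(G)` (rows sum to `1`; `P x y * P x' y' = 0` whenever `x ~ x'` and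
`y ≁ y'`; and `P x b` commutes with `P x' b'` whenever `x ~ x'`) containing a
non-commuting pair. -/
theorem stmt19 {V : Type*} [Fintype V] (G : SimpleGraph V)
    (f g : G →g G)
    (hf : ∃ x, f x ≠ x) (hg : ∃ y, g y ≠ y)
    (hdisj : ∀ x, f x ≠ x → g x = x)
    (hdisc : ∀ x y, f x ≠ x → g y ≠ y → ¬ G.Adj x y) :
    ∃ P : V → V → Matrix (Fin 2) (Fin 2) ℂ,
      (∀ x y, (P x y)ᴴ = P x y ∧ P x y * P x y = P x y) ∧
      (∀ x, ∑ y : V, P x y = 1) ∧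
      (∀ x x' y y', G.Adj x x' → ¬ G.Adj y y' → P x y * P x' y' = 0) ∧
      (∀ x x' b b', G.Adj x x' → P x b * P x' b' = P x' b' * P x b) ∧
      (∃ x y b b', P x b * P y b' ≠ P y b' * P x b) := by
  classical
  obtain ⟨x₀, hx₀⟩ := hf
  obtain ⟨y₀, hy₀⟩ := hg
  have hp := isStarProjection_coordProj
  have hq := isStarProjection_diagLineProj
  refine ⟨gluedProjMix f g coordProj diagLineProj,
    fun x y => ⟨(isStarProjection_gluedProjMix hp hq x y).isSelfAdjoint,
      (isStarProjection_gluedProjMix hp hq x y).isIdempotentElem⟩,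
    sum_gluedProjMix,
    fun x x' y y' hx hy => gluedProjMix_mul_eq_zero_of_not_adj hp.isIdempotentElem
      hq.isIdempotentElem hdisj hdisc hx hy,
    fun x x' b b' hx => commute_gluedProjMix hdisj hdisc hx b b',
    x₀, y₀, f x₀, g y₀, ?_⟩
  rw [gluedProjMix_of_right_fixed (hdisj x₀ hx₀), projMix_apply_apply_of_ne hx₀,
    gluedProjMix_of_right_not_fixed hy₀, projMix_apply_apply_of_ne hy₀]
  exact coordProj_mul_diagLineProj_ne
end
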